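/- arXiv:1408.0170 — 8 statements merged into one kernel-verified Lean document; each statement's English description precedes it below -/
import Mathlib

section
/- Under the stated assumptions, the Hammerstein integral operator T maps the cone K into itself: if (u,v) ∈ K then T(u,v) ∈ K. -/
open MeasureTheory Set

/-- The sup norm of a function over [0,1]. -/
noncomputable def supNorm (w : ℝ → ℝ) : ℝ :=
  sSup ((fun s => |w s|) '' Icc (0:ℝ) 1)

/-- Membership in the cone K̃ = {w ∈ C[0,1] : min_{t∈[a,b]} w(t) ≥ c‖w‖_∞}. -/
def inCone (a b c : ℝ) (w : ℝ → ℝ) : Prop :=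
  ContinuousOn w (Icc (0:ℝ) 1) ∧ ∀ t ∈ Icc a b, c * supNorm w ≤ w t

/-- A component of the Hammerstein integral operator. -/
noncomputable def Ham (k : ℝ → ℝ → ℝ) (g : ℝ → ℝ) (f : ℝ → ℝ → ℝ → ℝ)
    (u v : ℝ → ℝ) (t : ℝ) : ℝ :=
  ∫ s in Icc (0:ℝ) 1, k t s * g s * f s (u s) (v s)

/-- The standing assumptions on a kernel `k`, weight `g` (with majorant `Φ`),
nonlinearity `f` and data `a, b, c` of one Hammerstein integral equation. -/
structure Standing (k : ℝ → ℝ → ℝ) (g Φ : ℝ → ℝ) (f : ℝ → ℝ → ℝ → ℝ)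
    (a b c : ℝ) : Prop where
  k_meas : Measurable (Function.uncurry k)
  k_cont : ∀ τ ∈ Icc (0:ℝ) 1, ∀ᵐ s ∂(volume.restrict (Icc (0:ℝ) 1)),
    Filter.Tendsto (fun t => |k t s - k τ s|) (nhds τ) (nhds 0)
  hab : Icc a b ⊆ Icc (0:ℝ) 1
  a_lt_b : a < b
  c_pos : 0 < c
  c_le_one : c ≤ 1
  Φ_meas : Measurable Φ
  Φ_bdd : ∃ C : ℝ, ∀ᵐ s ∂(volume.restrict (Icc (0:ℝ) 1)), |Φ s| ≤ C
  k_le : ∀ t ∈ Icc (0:ℝ) 1, ∀ᵐ s ∂(volume.restrict (Icc (0:ℝ) 1)), |k t s| ≤ Φ s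
  k_ge : ∀ t ∈ Icc a b, ∀ᵐ s ∂(volume.restrict (Icc (0:ℝ) 1)), c * Φ s ≤ k t s
  g_meas : Measurable g
  g_nonneg : ∀ᵐ s ∂(volume.restrict (Icc (0:ℝ) 1)), 0 ≤ g s
  gΦ_int : IntegrableOn (fun s => g s * Φ s) (Icc (0:ℝ) 1)
  gΦ_pos : 0 < ∫ s in Icc a b, Φ s * g s
  f_nonneg : ∀ t u v, 0 ≤ f t u v
  f_meas : ∀ u v : ℝ, Measurable fun t => f t u v
  f_cont : ∀ᵐ t ∂(volume.restrict (Icc (0:ℝ) 1)),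
    Continuous fun p : ℝ × ℝ => f t p.1 p.2
  f_bdd : ∀ r > (0:ℝ), ∃ C : ℝ, ∀ᵐ t ∂(volume.restrict (Icc (0:ℝ) 1)),
    ∀ u v : ℝ, |u| ≤ r → |v| ≤ r → f t u v ≤ C

open Filter

lemma ceil_approx_tendsto (x : ℝ) :
    Tendsto (fun n : ℕ => (⌈x * ((n:ℝ)+1)⌉ : ℝ) / ((n:ℝ)+1)) atTop (nhds x) := by
  have hpos : ∀ n : ℕ, (0:ℝ) < (n:ℝ)+1 := fun n => by positivity
  have h1 : Tendsto (fun n : ℕ => x + 1/((n:ℝ)+1)) atTop (nhds (x+0)) :=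
    tendsto_const_nhds.add tendsto_one_div_add_atTop_nhds_zero_nat
  rw [add_zero] at h1
  refine tendsto_of_tendsto_of_tendsto_of_le_of_le tendsto_const_nhds h1 ?_ ?_
  · intro n
    rw [le_div_iff₀ (hpos n)]
    exact Int.le_ceil _
  · intro n
    rw [div_le_iff₀ (hpos n)]
    have h2 := (Int.ceil_lt_add_one (x * ((n:ℝ)+1))).le
    have h3 : (1/((n:ℝ)+1)) * ((n:ℝ)+1) = 1 := by field_simp
    nlinarith [hpos n]

lemma supNorm_bound {w : ℝ → ℝ} (hw : ContinuousOn w (Icc (0:ℝ) 1)) :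
    ∀ s ∈ Icc (0:ℝ) 1, |w s| ≤ supNorm w := by
  intro s hs
  refine le_csSup ?_ ⟨s, hs, rfl⟩
  exact (isCompact_Icc.image_of_continuousOn hw.abs).bddAbove

lemma key {k g Φ f} {a b c : ℝ} (h : Standing k g Φ f a b c)
    (u v : ℝ → ℝ) (hu : ContinuousOn u (Icc (0:ℝ) 1))
    (hv : ContinuousOn v (Icc (0:ℝ) 1)) :
    inCone a b c (Ham k g f u v) := by
  have hu_ae : AEMeasurable u (volume.restrict (Icc (0:ℝ) 1)) :=
    hu.aemeasurable measurableSet_Icc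
  have hv_ae : AEMeasurable v (volume.restrict (Icc (0:ℝ) 1)) :=
    hv.aemeasurable measurableSet_Icc
  -- measurability of the Nemytskii term
  have hFm : AEStronglyMeasurable (fun s => f s (u s) (v s))
      (volume.restrict (Icc (0:ℝ) 1)) := by
    have happrox : ∀ n : ℕ, AEStronglyMeasurable
        (fun s => f s ((⌈u s * ((n:ℝ)+1)⌉ : ℝ)/((n:ℝ)+1)) ((⌈v s * ((n:ℝ)+1)⌉ : ℝ)/((n:ℝ)+1)))
        (volume.restrict (Icc (0:ℝ) 1)) := by
      intro n
      have hq : Measurable (fun p : ℝ × (ℤ × ℤ) =>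
          f p.1 ((p.2.1:ℝ)/((n:ℝ)+1)) ((p.2.2:ℝ)/((n:ℝ)+1))) :=
        measurable_from_prod_countable_left (fun m => h.f_meas ((m.1:ℝ)/((n:ℝ)+1)) ((m.2:ℝ)/((n:ℝ)+1)))
      have hp : AEMeasurable (fun s => (s, (⌈u s * ((n:ℝ)+1)⌉, ⌈v s * ((n:ℝ)+1)⌉)))
          (volume.restrict (Icc (0:ℝ) 1)) :=
        aemeasurable_id.prodMk
          (((Int.measurable_ceil.comp_aemeasurable (hu_ae.mul aemeasurable_const))).prodMk
            (Int.measurable_ceil.comp_aemeasurable (hv_ae.mul aemeasurable_const)))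
      exact (hq.comp_aemeasurable hp).aestronglyMeasurable
    apply aestronglyMeasurable_of_tendsto_ae atTop happrox
    filter_upwards [h.f_cont] with s hs
    exact (hs.tendsto (u s, v s)).comp
      ((ceil_approx_tendsto (u s)).prodMk_nhds (ceil_approx_tendsto (v s)))
  -- uniform bound on f ∘ (id, u, v)
  have hr1 : (0:ℝ) < max (max (supNorm u) (supNorm v)) 1 :=
    lt_of_lt_of_le one_pos (le_max_right _ _)
  obtain ⟨C, hC⟩ := h.f_bdd _ hr1
  set C' := max C 0 with hC'def
  have hC'0 : (0:ℝ) ≤ C' := le_max_right _ _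
  have hFC : ∀ᵐ s ∂(volume.restrict (Icc (0:ℝ) 1)), f s (u s) (v s) ≤ C' := by
    filter_upwards [hC, ae_restrict_mem measurableSet_Icc] with s h1 h2
    exact le_trans (h1 (u s) (v s)
      ((supNorm_bound hu s h2).trans ((le_max_left _ _).trans (le_max_left _ _)))
      ((supNorm_bound hv s h2).trans ((le_max_right _ _).trans (le_max_left _ _))))
      (le_max_left _ _)
  have hΦ0 : ∀ᵐ s ∂(volume.restrict (Icc (0:ℝ) 1)), 0 ≤ Φ s := by
    filter_upwards [h.k_le 0 (by norm_num)] with s hs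
    exact (abs_nonneg _).trans hs
  -- the dominating function
  have hBint : Integrable (fun s => g s * Φ s * C') (volume.restrict (Icc (0:ℝ) 1)) :=
    h.gΦ_int.mul_const C'
  have hkmeas : ∀ t, Measurable (fun s => k t s) := fun t =>
    h.k_meas.comp measurable_prodMk_left
  have hIm : ∀ t, AEStronglyMeasurable (fun s => k t s * g s * f s (u s) (v s))
      (volume.restrict (Icc (0:ℝ) 1)) := fun t =>
    ((((hkmeas t).mul h.g_meas).aemeasurable.mul hFm.aemeasurable)).aestronglyMeasurable
  have habs : ∀ t ∈ Icc (0:ℝ) 1, ∀ᵐ s ∂(volume.restrict (Icc (0:ℝ) 1)),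
      |k t s * g s * f s (u s) (v s)| ≤ Φ s * g s * f s (u s) (v s) := by
    intro t ht
    filter_upwards [h.k_le t ht, h.g_nonneg] with s h1 h2
    rw [abs_mul, abs_mul, abs_of_nonneg h2, abs_of_nonneg (h.f_nonneg s (u s) (v s))]
    exact mul_le_mul_of_nonneg_right (mul_le_mul_of_nonneg_right h1 h2)
      (h.f_nonneg s (u s) (v s))
  have hMb : ∀ᵐ s ∂(volume.restrict (Icc (0:ℝ) 1)),
      ‖Φ s * g s * f s (u s) (v s)‖ ≤ g s * Φ s * C' := by
    filter_upwards [h.g_nonneg, hFC, hΦ0] with s h2 h3 h4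
    have hf0 : 0 ≤ f s (u s) (v s) := h.f_nonneg s (u s) (v s)
    rw [Real.norm_eq_abs, abs_of_nonneg (mul_nonneg (mul_nonneg h4 h2) hf0)]
    nlinarith [mul_le_mul_of_nonneg_left h3 (mul_nonneg h4 h2)]
  have hMm : AEStronglyMeasurable (fun s => Φ s * g s * f s (u s) (v s))
      (volume.restrict (Icc (0:ℝ) 1)) :=
    ((h.Φ_meas.mul h.g_meas).aemeasurable.mul hFm.aemeasurable).aestronglyMeasurable
  have hMi : Integrable (fun s => Φ s * g s * f s (u s) (v s))
      (volume.restrict (Icc (0:ℝ) 1)) := hBint.mono' hMm hMb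
  have hIb : ∀ t ∈ Icc (0:ℝ) 1, ∀ᵐ s ∂(volume.restrict (Icc (0:ℝ) 1)),
      ‖k t s * g s * f s (u s) (v s)‖ ≤ g s * Φ s * C' := by
    intro t ht
    filter_upwards [habs t ht, hMb, h.g_nonneg, hΦ0] with s h1 h2 h3 h4
    rw [Real.norm_eq_abs]
    refine h1.trans ?_
    rw [Real.norm_eq_abs, abs_of_nonneg
      (mul_nonneg (mul_nonneg h4 h3) (h.f_nonneg s (u s) (v s)))] at h2
    exact h2
  have hIi : ∀ t ∈ Icc (0:ℝ) 1, Integrable (fun s => k t s * g s * f s (u s) (v s))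
      (volume.restrict (Icc (0:ℝ) 1)) := fun t ht => hBint.mono' (hIm t) (hIb t ht)
  set M := ∫ s in Icc (0:ℝ) 1, Φ s * g s * f s (u s) (v s) with hMdef
  have hM0 : 0 ≤ M := by
    refine integral_nonneg_of_ae ?_
    filter_upwards [h.g_nonneg, hΦ0] with s h2 h4
    exact mul_nonneg (mul_nonneg h4 h2) (h.f_nonneg s (u s) (v s))
  have hwle : ∀ t ∈ Icc (0:ℝ) 1, |Ham k g f u v t| ≤ M := by
    intro t ht
    rw [Ham, ← Real.norm_eq_abs]
    refine (norm_integral_le_integral_norm _).trans ?_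
    refine integral_mono_ae (hIi t ht).norm hMi ?_
    filter_upwards [habs t ht] with s hs
    rwa [Real.norm_eq_abs]
  have hge : ∀ t ∈ Icc a b, c * M ≤ Ham k g f u v t := by
    intro t ht
    have ht' := h.hab ht
    have hmono : ∫ s in Icc (0:ℝ) 1, c * (Φ s * g s * f s (u s) (v s))
        ≤ ∫ s in Icc (0:ℝ) 1, k t s * g s * f s (u s) (v s) := by
      refine integral_mono_ae (hMi.const_mul c) (hIi t ht') ?_
      filter_upwards [h.k_ge t ht, h.g_nonneg] with s h1 h2
      have hf0 : 0 ≤ f s (u s) (v s) := h.f_nonneg s (u s) (v s)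
      nlinarith [mul_le_mul_of_nonneg_right h1 (mul_nonneg h2 hf0)]
    rwa [integral_const_mul] at hmono
  have hcont : ContinuousOn (Ham k g f u v) (Icc (0:ℝ) 1) := by
    intro τ hτ
    have := tendsto_integral_filter_of_dominated_convergence
      (μ := volume.restrict (Icc (0:ℝ) 1))
      (F := fun t s => k t s * g s * f s (u s) (v s))
      (f := fun s => k τ s * g s * f s (u s) (v s))
      (l := nhdsWithin τ (Icc (0:ℝ) 1))
      (fun s => g s * Φ s * C')
      (Filter.Eventually.of_forall (fun t => hIm t))
      (Filter.eventually_of_mem self_mem_nhdsWithin (fun t ht => hIb t ht))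
      hBint ?_
    · exact this
    · filter_upwards [h.k_cont τ hτ] with s hs
      have hks : Tendsto (fun t => k t s) (nhds τ) (nhds (k τ s)) := by
        rw [tendsto_iff_norm_sub_tendsto_zero]
        simpa [Real.norm_eq_abs] using hs
      exact (((hks.mono_left nhdsWithin_le_nhds).mul_const (g s)).mul_const
        (f s (u s) (v s)))
  refine ⟨hcont, fun t ht => ?_⟩
  have h1 := hge t ht
  have h2 : supNorm (Ham k g f u v) ≤ M := by
    refine Real.sSup_le ?_ hM0
    rintro x ⟨s, hs, rfl⟩
    exact hwle s hs
  nlinarith [h.c_pos]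

/-- Under the standing assumptions, the Hammerstein integral operator
`T = (T₁, T₂)` maps the cone `K = K̃₁ × K̃₂` into itself. -/
theorem stmt1 (k₁ k₂ : ℝ → ℝ → ℝ) (g₁ g₂ Φ₁ Φ₂ : ℝ → ℝ)
    (f₁ f₂ : ℝ → ℝ → ℝ → ℝ) (a₁ b₁ c₁ a₂ b₂ c₂ : ℝ)
    (h₁ : Standing k₁ g₁ Φ₁ f₁ a₁ b₁ c₁)
    (h₂ : Standing k₂ g₂ Φ₂ f₂ a₂ b₂ c₂)
    (u v : ℝ → ℝ)
    (hu : inCone a₁ b₁ c₁ u) (hv : inCone a₂ b₂ c₂ v) :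
    inCone a₁ b₁ c₁ (Ham k₁ g₁ f₁ u v) ∧ inCone a₂ b₂ c₂ (Ham k₂ g₂ f₂ u v) := by
  exact ⟨key h₁ u v hu.1 hv.1, key h₂ u v hu.1 hv.1⟩
end

section
/- Suppose f₁(t,u₁,u₂) < m₁|u₁| for all t ∈ [0,1] and u₁ ≠ 0, and f₂(t,u₁,u₂) < m₂|u₂| for all t ∈ [0,1] and u₂ ≠ 0, where 1/mᵢ = sup_{t∈[0,1]} ∫₀¹ |kᵢ(t,s)| gᵢ(s) ds. Then the only fixed point of T in K is (0,0); i.e., the system u = ∫₀¹ k₁(·,s)g₁(s)f₁(s,u,v) ds, v = ∫₀¹ k₂(·,s)g₂(s)f₂(s,u,v) ds has no nontrivial solution in K. -/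
open MeasureTheory Set

open Filter Topology in
lemma key_zero (k : ℝ → ℝ → ℝ) (g Φ : ℝ → ℝ) (f : ℝ → ℝ → ℝ → ℝ)
    (a b c m : ℝ) (h : Standing k g Φ f a b c) (hm : 0 < m)
    (hm' : 1 / m = sSup ((fun t => ∫ s in Icc (0:ℝ) 1, |k t s| * g s) '' Icc (0:ℝ) 1))
    (hf : ∀ t ∈ Icc (0:ℝ) 1, ∀ u₁ u₂ : ℝ, u₁ ≠ 0 → f t u₁ u₂ < m * |u₁|)
    (u v : ℝ → ℝ) (hu : ContinuousOn u (Icc (0:ℝ) 1)) (hv : ContinuousOn v (Icc (0:ℝ) 1))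
    (heq : ∀ t ∈ Icc (0:ℝ) 1, u t = Ham k g f u v t) : supNorm u = 0 := by
  classical
  by_contra hne
  have h01 : (0:ℝ) ≤ 1 := zero_le_one
  have hI0 : (0:ℝ) ∈ Icc (0:ℝ) 1 := by norm_num
  -- basic supNorm facts
  have hbdd : BddAbove ((fun s => |u s|) '' Icc (0:ℝ) 1) :=
    isCompact_Icc.bddAbove_image hu.abs
  have hbddv : BddAbove ((fun s => |v s|) '' Icc (0:ℝ) 1) :=
    isCompact_Icc.bddAbove_image hv.abs
  have hle_sup : ∀ s ∈ Icc (0:ℝ) 1, |u s| ≤ supNorm u :=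
    fun s hs => le_csSup hbdd (mem_image_of_mem _ hs)
  have hle_supv : ∀ s ∈ Icc (0:ℝ) 1, |v s| ≤ supNorm v :=
    fun s hs => le_csSup hbddv (mem_image_of_mem _ hs)
  have hsup_nonneg : 0 ≤ supNorm u := le_trans (abs_nonneg _) (hle_sup 0 hI0)
  have hsup_pos : 0 < supNorm u := lt_of_le_of_ne hsup_nonneg (Ne.symm hne)
  obtain ⟨t₀, ht₀, hmax⟩ := isCompact_Icc.exists_isMaxOn ⟨0, hI0⟩ hu.abs
  have hsup_eq : supNorm u = |u t₀| := by
    apply IsGreatest.csSup_eq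
    exact ⟨mem_image_of_mem _ ht₀, by rintro x ⟨s, hs, rfl⟩; exact hmax hs⟩
  -- continuous extensions of u, v
  set ue : ℝ → ℝ := fun x => u ((projIcc 0 1 h01 x : Icc (0:ℝ) 1) : ℝ) with hue
  set ve : ℝ → ℝ := fun x => v ((projIcc 0 1 h01 x : Icc (0:ℝ) 1) : ℝ) with hve
  have huec : Continuous ue :=
    hu.comp_continuous (continuous_subtype_val.comp continuous_projIcc)
      (fun x => (projIcc 0 1 h01 x).2)
  have hvec : Continuous ve :=
    hv.comp_continuous (continuous_subtype_val.comp continuous_projIcc)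
      (fun x => (projIcc 0 1 h01 x).2)
  have hueeq : ∀ s ∈ Icc (0:ℝ) 1, ue s = u s := fun s hs => by
    simp [ue, projIcc_of_mem h01 hs]
  have hveeq : ∀ s ∈ Icc (0:ℝ) 1, ve s = v s := fun s hs => by
    simp [ve, projIcc_of_mem h01 hs]
  -- modified nonlinearity, measurable and everywhere continuous in (u,v)
  obtain ⟨N, hNm, hNnull, hNsub⟩ :
      ∃ N, MeasurableSet N ∧ volume.restrict (Icc (0:ℝ) 1) N = 0 ∧
        {t : ℝ | ¬ Continuous fun p : ℝ × ℝ => f t p.1 p.2} ⊆ N := by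
    refine ⟨toMeasurable (volume.restrict (Icc (0:ℝ) 1)) _,
      measurableSet_toMeasurable _ _, ?_, subset_toMeasurable _ _⟩
    rw [measure_toMeasurable]
    exact ae_iff.mp h.f_cont
  set F : ℝ → ℝ := fun s => f s (u s) (v s) with hFdef
  set f' : (ℝ × ℝ) → ℝ → ℝ := fun p t => if t ∈ N then 0 else f t p.1 p.2 with hf'def
  have hcont' : ∀ t : ℝ, Continuous fun p : ℝ × ℝ => f' p t := by
    intro t
    by_cases ht : t ∈ N
    · simp only [f', if_pos ht]; exact continuous_const
    · simp only [f', if_neg ht]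
      by_contra hc
      exact ht (hNsub hc)
  have hmeas_unc : Measurable (Function.uncurry f') :=
    measurable_uncurry_of_continuous_of_measurable hcont'
      (fun p => Measurable.ite hNm measurable_const (h.f_meas p.1 p.2))
  have hFmeas : AEStronglyMeasurable F (volume.restrict (Icc (0:ℝ) 1)) := by
    have hGm : Measurable fun s : ℝ => f' (ue s, ve s) s :=
      hmeas_unc.comp ((huec.measurable.prodMk hvec.measurable).prodMk measurable_id)
    refine hGm.aestronglyMeasurable.congr ?_
    have h2 : ∀ᵐ s ∂(volume.restrict (Icc (0:ℝ) 1)), s ∉ N := by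
      rw [ae_iff]; simpa using hNnull
    filter_upwards [ae_restrict_mem measurableSet_Icc, h2] with s hs hsN
    simp [f', F, if_neg hsN, hueeq s hs, hveeq s hs]
  -- nonnegativity and bounds
  have hg0 := h.g_nonneg
  have hkΦ := h.k_le t₀ ht₀
  have hΦ0 : ∀ᵐ s ∂(volume.restrict (Icc (0:ℝ) 1)), 0 ≤ Φ s :=
    hkΦ.mono fun s hh => le_trans (abs_nonneg _) hh
  have hF0 : ∀ s, 0 ≤ F s := fun s => h.f_nonneg s (u s) (v s)
  set R : ℝ := max (supNorm u) (max (supNorm v) 1) with hR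
  have hRpos : (0:ℝ) < R := lt_of_lt_of_le one_pos (le_trans (le_max_right _ _) (le_max_right _ _))
  obtain ⟨C, hC⟩ := h.f_bdd R hRpos
  have hFbd : ∀ᵐ s ∂(volume.restrict (Icc (0:ℝ) 1)), F s ≤ C := by
    filter_upwards [hC, ae_restrict_mem measurableSet_Icc] with s hs hsI
    exact hs (u s) (v s) (le_trans (hle_sup s hsI) (le_max_left _ _))
      (le_trans (hle_supv s hsI) (le_trans (le_max_left _ _) (le_max_right _ _)))
  have hkm : Measurable fun s => k t₀ s :=
    h.k_meas.comp (measurable_const.prodMk measurable_id)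
  have hgΦ : Integrable (fun s => g s * Φ s) (volume.restrict (Icc (0:ℝ) 1)) := h.gΦ_int
  -- integrability of |k t·| g for t ∈ I
  have hkg_int : ∀ t ∈ Icc (0:ℝ) 1,
      Integrable (fun s => |k t s| * g s) (volume.restrict (Icc (0:ℝ) 1)) := by
    intro t ht
    refine Integrable.mono' hgΦ
      (((h.k_meas.comp (measurable_const.prodMk measurable_id)).abs.mul h.g_meas).aestronglyMeasurable) ?_
    filter_upwards [h.k_le t ht, hg0] with s h1 h2
    rw [Real.norm_eq_abs, abs_of_nonneg (mul_nonneg (abs_nonneg _) h2)]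
    calc |k t s| * g s ≤ Φ s * g s := mul_le_mul_of_nonneg_right h1 h2
      _ = g s * Φ s := mul_comm _ _
  -- integrability of the two integrands
  have hGf_int : Integrable (fun s => |k t₀ s| * g s * F s) (volume.restrict (Icc (0:ℝ) 1)) := by
    refine Integrable.mono' (hgΦ.const_mul (max C 0))
      (((hkm.abs.mul h.g_meas).aestronglyMeasurable).mul hFmeas) ?_
    filter_upwards [hkΦ, hg0, hFbd, hΦ0] with s h1 h2 h3 h4
    rw [Real.norm_eq_abs, abs_of_nonneg (mul_nonneg (mul_nonneg (abs_nonneg _) h2) (hF0 s))]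
    have e1 : |k t₀ s| * g s ≤ Φ s * g s := mul_le_mul_of_nonneg_right h1 h2
    calc |k t₀ s| * g s * F s ≤ (Φ s * g s) * max C 0 :=
          mul_le_mul e1 (le_trans h3 (le_max_left _ _)) (hF0 s)
            (mul_nonneg h4 h2)
      _ = max C 0 * (g s * Φ s) := by ring
  have huae : AEMeasurable u (volume.restrict (Icc (0:ℝ) 1)) :=
    hu.aemeasurable measurableSet_Icc
  have hGm_int : Integrable (fun s => |k t₀ s| * g s * (m * |u s|))
      (volume.restrict (Icc (0:ℝ) 1)) := by
    refine Integrable.mono' (hgΦ.const_mul (m * supNorm u))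
      (((hkm.abs.mul h.g_meas).aemeasurable.mul
        ((aemeasurable_const (b := m)).mul
          (continuous_abs.measurable.comp_aemeasurable huae))).aestronglyMeasurable) ?_
    filter_upwards [hkΦ, hg0, hΦ0, ae_restrict_mem measurableSet_Icc] with s h1 h2 h4 hsI
    rw [Real.norm_eq_abs, abs_of_nonneg (mul_nonneg (mul_nonneg (abs_nonneg _) h2)
      (mul_nonneg hm.le (abs_nonneg _)))]
    have e1 : |k t₀ s| * g s ≤ Φ s * g s := mul_le_mul_of_nonneg_right h1 h2
    calc |k t₀ s| * g s * (m * |u s|) ≤ (Φ s * g s) * (m * supNorm u) :=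
          mul_le_mul e1 (mul_le_mul_of_nonneg_left (hle_sup s hsI) hm.le)
            (mul_nonneg hm.le (abs_nonneg _)) (mul_nonneg h4 h2)
      _ = m * supNorm u * (g s * Φ s) := by ring
  -- pointwise a.e. bound F ≤ m |u|
  have hFle : ∀ᵐ s ∂(volume.restrict (Icc (0:ℝ) 1)), F s ≤ m * |u s| := by
    filter_upwards [ae_restrict_mem measurableSet_Icc, h.f_cont] with s hsI hc
    by_cases hus : u s = 0
    · have h0 : f s 0 (v s) ≤ 0 := by
        have l1 : Tendsto (fun ε : ℝ => f s ε (v s)) (𝓝[≠] (0:ℝ)) (𝓝 (f s 0 (v s))) := by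
          have hcc : Continuous fun ε : ℝ => f s ε (v s) :=
            hc.comp (continuous_id.prodMk continuous_const)
          exact (hcc.tendsto 0).mono_left nhdsWithin_le_nhds
        have l2 : Tendsto (fun ε : ℝ => m * |ε|) (𝓝[≠] (0:ℝ)) (𝓝 0) := by
          have hcc : Continuous fun ε : ℝ => m * |ε| := continuous_const.mul continuous_abs
          have := (hcc.tendsto 0).mono_left (nhdsWithin_le_nhds (s := {(0:ℝ)}ᶜ))
          simpa using this
        refine le_of_tendsto_of_tendsto l1 l2 ?_
        filter_upwards [self_mem_nhdsWithin] with ε hε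
        exact (hf s hsI ε (v s) (by simpa using hε)).le
      have : F s ≤ 0 := by rw [hFdef]; simpa [hus] using h0
      simpa [hus] using this
    · exact (hf s hsI (u s) (v s) hus).le
  -- the chain of inequalities
  have e2 : u t₀ = ∫ s in Icc (0:ℝ) 1, k t₀ s * g s * F s := heq t₀ ht₀
  have e3 : |u t₀| ≤ ∫ s in Icc (0:ℝ) 1, |k t₀ s| * g s * F s := by
    rw [e2]
    calc |∫ s in Icc (0:ℝ) 1, k t₀ s * g s * F s|
        ≤ ∫ s in Icc (0:ℝ) 1, |k t₀ s| * |g s| * |F s| := by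
          simpa [Real.norm_eq_abs, abs_mul] using
            norm_integral_le_integral_norm (μ := volume.restrict (Icc (0:ℝ) 1))
              (fun s => k t₀ s * g s * F s)
      _ = ∫ s in Icc (0:ℝ) 1, |k t₀ s| * g s * F s := by
          apply integral_congr_ae
          filter_upwards [hg0] with s h2
          rw [abs_of_nonneg h2, abs_of_nonneg (hF0 s)]
  have e4 : ∫ s in Icc (0:ℝ) 1, |k t₀ s| * g s * F s
      ≤ ∫ s in Icc (0:ℝ) 1, |k t₀ s| * g s * (m * |u s|) := by
    apply integral_mono_ae hGf_int hGm_int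
    filter_upwards [hFle, hg0] with s h1 h2
    exact mul_le_mul_of_nonneg_left h1 (mul_nonneg (abs_nonneg _) h2)
  have hsup_int : (∫ s in Icc (0:ℝ) 1, |k t₀ s| * g s) ≤ 1 / m := by
    rw [hm']
    refine le_csSup ⟨∫ s in Icc (0:ℝ) 1, g s * Φ s, ?_⟩ (mem_image_of_mem _ ht₀)
    rintro x ⟨t, ht, rfl⟩
    apply integral_mono_ae (hkg_int t ht) hgΦ
    filter_upwards [h.k_le t ht, hg0] with s h1 h2
    calc |k t s| * g s ≤ Φ s * g s := mul_le_mul_of_nonneg_right h1 h2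
      _ = g s * Φ s := mul_comm _ _
  have e5 : ∫ s in Icc (0:ℝ) 1, |k t₀ s| * g s * (m * |u s|) ≤ supNorm u := by
    have step : ∫ s in Icc (0:ℝ) 1, |k t₀ s| * g s * (m * |u s|)
        ≤ ∫ s in Icc (0:ℝ) 1, (m * supNorm u) * (|k t₀ s| * g s) := by
      apply integral_mono_ae hGm_int ((hkg_int t₀ ht₀).const_mul _)
      filter_upwards [ae_restrict_mem measurableSet_Icc, hg0] with s hsI h2
      have hb : m * |u s| ≤ m * supNorm u := mul_le_mul_of_nonneg_left (hle_sup s hsI) hm.le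
      calc |k t₀ s| * g s * (m * |u s|) ≤ |k t₀ s| * g s * (m * supNorm u) :=
            mul_le_mul_of_nonneg_left hb (mul_nonneg (abs_nonneg _) h2)
        _ = (m * supNorm u) * (|k t₀ s| * g s) := by ring
    have step2 : ∫ s in Icc (0:ℝ) 1, (m * supNorm u) * (|k t₀ s| * g s)
        = (m * supNorm u) * ∫ s in Icc (0:ℝ) 1, |k t₀ s| * g s :=
      integral_const_mul _ _
    have step3 : (m * supNorm u) * (∫ s in Icc (0:ℝ) 1, |k t₀ s| * g s)
        ≤ (m * supNorm u) * (1 / m) :=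
      mul_le_mul_of_nonneg_left hsup_int (mul_nonneg hm.le hsup_nonneg)
    have step4 : (m * supNorm u) * (1 / m) = supNorm u := by
      field_simp
    linarith [step, step2.le, step2.ge, step3]
  -- equality of integrals
  have hEq : ∫ s in Icc (0:ℝ) 1, |k t₀ s| * g s * F s
      = ∫ s in Icc (0:ℝ) 1, |k t₀ s| * g s * (m * |u s|) := by
    have : supNorm u ≤ ∫ s in Icc (0:ℝ) 1, |k t₀ s| * g s * F s := hsup_eq ▸ e3
    linarith
  have hEq2 : ∫ s in Icc (0:ℝ) 1, |k t₀ s| * g s * F s = supNorm u := by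
    have : supNorm u ≤ ∫ s in Icc (0:ℝ) 1, |k t₀ s| * g s * F s := hsup_eq ▸ e3
    linarith
  -- a.e. equality of integrands
  have hdiff : (fun s => |k t₀ s| * g s * (m * |u s|) - |k t₀ s| * g s * F s)
      =ᵐ[volume.restrict (Icc (0:ℝ) 1)] 0 := by
    refine (integral_eq_zero_iff_of_nonneg_ae ?_ (hGm_int.sub hGf_int)).mp ?_
    · filter_upwards [hFle, hg0] with s h1 h2
      have h3 := mul_le_mul_of_nonneg_left h1 (mul_nonneg (abs_nonneg (k t₀ s)) h2)
      simpa using sub_nonneg.mpr h3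
    · show (∫ s in Icc (0:ℝ) 1,
          (|k t₀ s| * g s * (m * |u s|) - |k t₀ s| * g s * F s)) = 0
      rw [integral_sub hGm_int hGf_int]
      linarith
  -- conclude integrand is a.e. zero
  have hzero : (fun s => |k t₀ s| * g s * F s) =ᵐ[volume.restrict (Icc (0:ℝ) 1)] 0 := by
    filter_upwards [hdiff, ae_restrict_mem measurableSet_Icc, hFle] with s hd hsI h1
    simp only [Pi.zero_apply] at hd ⊢
    by_cases hus : u s = 0
    · have hF0' : F s = 0 := le_antisymm (by simpa [hus] using h1) (hF0 s)
      simp [hF0']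
    · have hfac : |k t₀ s| * g s * (m * |u s| - F s) = 0 := by ring_nf; ring_nf at hd; linarith
      rcases mul_eq_zero.mp hfac with hh | hh
      · rw [hh, zero_mul]
      · have : F s < m * |u s| := hf s hsI (u s) (v s) hus
        have : m * |u s| - F s ≠ 0 := by linarith
        exact absurd hh this
  have hzero_int : ∫ s in Icc (0:ℝ) 1, |k t₀ s| * g s * F s = 0 := by
    rw [integral_congr_ae hzero]; simp
  linarith [hEq2, hzero_int, hsup_pos]

/-- if `fᵢ(t,u₁,u₂) < mᵢ|uᵢ|` for `uᵢ ≠ 0`, where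
`1/mᵢ = sup_{t∈[0,1]} ∫₀¹ |kᵢ(t,s)| gᵢ(s) ds`, then the Hammerstein system has
no nontrivial solution in the cone `K`. -/
theorem stmt4 (k₁ k₂ : ℝ → ℝ → ℝ) (g₁ g₂ Φ₁ Φ₂ : ℝ → ℝ)
    (f₁ f₂ : ℝ → ℝ → ℝ → ℝ) (a₁ b₁ c₁ a₂ b₂ c₂ m₁ m₂ : ℝ)
    (h₁ : Standing k₁ g₁ Φ₁ f₁ a₁ b₁ c₁)
    (h₂ : Standing k₂ g₂ Φ₂ f₂ a₂ b₂ c₂)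
    (hm₁ : 0 < m₁)
    (hm₁' : 1 / m₁ = sSup ((fun t => ∫ s in Icc (0:ℝ) 1, |k₁ t s| * g₁ s) '' Icc (0:ℝ) 1))
    (hm₂ : 0 < m₂)
    (hm₂' : 1 / m₂ = sSup ((fun t => ∫ s in Icc (0:ℝ) 1, |k₂ t s| * g₂ s) '' Icc (0:ℝ) 1))
    (hf₁ : ∀ t ∈ Icc (0:ℝ) 1, ∀ u₁ u₂ : ℝ, u₁ ≠ 0 → f₁ t u₁ u₂ < m₁ * |u₁|)
    (hf₂ : ∀ t ∈ Icc (0:ℝ) 1, ∀ u₁ u₂ : ℝ, u₂ ≠ 0 → f₂ t u₁ u₂ < m₂ * |u₂|) :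
    ¬ ∃ u v : ℝ → ℝ, inCone a₁ b₁ c₁ u ∧ inCone a₂ b₂ c₂ v ∧
      (∀ t ∈ Icc (0:ℝ) 1, u t = Ham k₁ g₁ f₁ u v t ∧ v t = Ham k₂ g₂ f₂ u v t) ∧
      (supNorm u ≠ 0 ∨ supNorm v ≠ 0) := by
  rintro ⟨u, v, hu, hv, heq, hne⟩
  have hu0 : supNorm u = 0 :=
    key_zero k₁ g₁ Φ₁ f₁ a₁ b₁ c₁ m₁ h₁ hm₁ hm₁' hf₁ u v hu.1 hv.1
      (fun t ht => (heq t ht).1)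
  have h₂' : Standing k₂ g₂ Φ₂ (fun t x y => f₂ t y x) a₂ b₂ c₂ :=
    { h₂ with
      f_nonneg := fun t x y => h₂.f_nonneg t y x
      f_meas := fun x y => h₂.f_meas y x
      f_cont := h₂.f_cont.mono fun t ht => ht.comp (continuous_snd.prodMk continuous_fst)
      f_bdd := fun r hr => (h₂.f_bdd r hr).imp fun C hC =>
        hC.mono fun t hC' x y hx hy => hC' y x hy hx }
  have hv0 : supNorm v = 0 :=
    key_zero k₂ g₂ Φ₂ (fun t x y => f₂ t y x) a₂ b₂ c₂ m₂ h₂' hm₂ hm₂'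
      (fun t ht x y hx => hf₂ t ht y x hx) v u hv.1 hu.1
      (fun t ht => (heq t ht).2)
  rcases hne with hne | hne
  · exact hne hu0
  · exact hne hv0
end

section
/- Suppose f₁(t,u₁,u₂) > M₁ u₁ for all t ∈ [a₁,b₁] and u₁ > 0, and f₂(t,u₁,u₂) > M₂ u₂ for all t ∈ [a₂,b₂] and u₂ > 0, where 1/Mᵢ = inf_{t∈[aᵢ,bᵢ]} ∫_{aᵢ}^{bᵢ} kᵢ(t,s) gᵢ(s) ds > 0. Then the system of Hammerstein equations has no nontrivial solution in the cone K. -/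
open MeasureTheory Set

lemma aux_no_sol {k : ℝ → ℝ → ℝ} {g Φ ψ w : ℝ → ℝ} {f : ℝ → ℝ → ℝ → ℝ} {a b c M : ℝ}
    (h : Standing k g Φ f a b c) (hM : 0 < M) (hMpos : 0 < 1 / M)
    (hM' : 1 / M = sInf ((fun t => ∫ s in Icc a b, k t s * g s) '' Icc a b))
    (hcone : inCone a b c w) (hNne : supNorm w ≠ 0)
    (hψ : ∀ s ∈ Icc a b, M * w s < ψ s)
    (hψ0 : ∀ s, 0 ≤ ψ s)
    (heq : ∀ t ∈ Icc (0:ℝ) 1, w t = ∫ s in Icc (0:ℝ) 1, k t s * g s * ψ s) :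
    False := by
  obtain ⟨hwcont, hconeineq⟩ := hcone
  -- sup norm is positive
  have hbdd : BddAbove ((fun s => |w s|) '' Icc (0:ℝ) 1) :=
    isCompact_Icc.bddAbove_image hwcont.abs
  have hle : ∀ s ∈ Icc (0:ℝ) 1, |w s| ≤ supNorm w := fun s hs =>
    le_csSup hbdd ⟨s, hs, rfl⟩
  have hN0 : 0 ≤ supNorm w :=
    le_trans (abs_nonneg _) (hle 0 ⟨le_refl _, zero_le_one⟩)
  have hNpos : 0 < supNorm w := lt_of_le_of_ne hN0 (Ne.symm hNne)
  have hab01 := h.hab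
  have habne : (Icc a b).Nonempty := nonempty_Icc.mpr h.a_lt_b.le
  -- minimum point of w on [a,b]
  obtain ⟨t₀, ht₀, hmin'⟩ :=
    isCompact_Icc.exists_isMinOn habne (hwcont.mono hab01)
  have hmin : ∀ s ∈ Icc a b, w t₀ ≤ w s := fun s hs => hmin' hs
  set m := w t₀ with hm_def
  have hm : 0 < m := lt_of_lt_of_le (mul_pos h.c_pos hNpos) (hconeineq t₀ ht₀)
  -- a.e. facts on the restricted measures
  have hΦ0 : ∀ᵐ s ∂(volume.restrict (Icc (0:ℝ) 1)), 0 ≤ Φ s := by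
    filter_upwards [h.k_le t₀ (hab01 ht₀)] with s hs
    exact le_trans (abs_nonneg _) hs
  have hkge01 := h.k_ge t₀ ht₀
  have hkle01 := h.k_le t₀ (hab01 ht₀)
  have hg01 := h.g_nonneg
  have hkg0_01 : ∀ᵐ s ∂(volume.restrict (Icc (0:ℝ) 1)), 0 ≤ k t₀ s * g s := by
    filter_upwards [hkge01, hg01, hΦ0] with s h1 h2 h3
    exact mul_nonneg (le_trans (mul_nonneg h.c_pos.le h3) h1) h2
  have hkg0 : ∀ᵐ s ∂(volume.restrict (Icc a b)), 0 ≤ k t₀ s * g s :=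
    ae_restrict_of_ae_restrict_of_subset hab01 hkg0_01
  have hkle : ∀ᵐ s ∂(volume.restrict (Icc a b)), |k t₀ s| ≤ Φ s :=
    ae_restrict_of_ae_restrict_of_subset hab01 hkle01
  have hg : ∀ᵐ s ∂(volume.restrict (Icc a b)), 0 ≤ g s :=
    ae_restrict_of_ae_restrict_of_subset hab01 hg01
  have hmem_ab : ∀ᵐ s ∂(volume.restrict (Icc a b)), s ∈ Icc a b :=
    ae_restrict_mem measurableSet_Icc
  -- measurability of s ↦ k t₀ s
  have hkmeas : Measurable (fun s => k t₀ s) :=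
    h.k_meas.comp (measurable_prodMk_left)
  have hkgmeas : Measurable (fun s => k t₀ s * g s) := hkmeas.mul h.g_meas
  -- integrability of kg on [a,b]
  have hgΦab : IntegrableOn (fun s => g s * Φ s) (Icc a b) := h.gΦ_int.mono_set hab01
  have hkg_int : IntegrableOn (fun s => k t₀ s * g s) (Icc a b) := by
    refine Integrable.mono' hgΦab hkgmeas.aestronglyMeasurable ?_
    filter_upwards [hkle, hg, ae_restrict_of_ae_restrict_of_subset hab01 hΦ0]
      with s h1 h2 h3
    rw [Real.norm_eq_abs, abs_mul, abs_of_nonneg h2]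
    calc |k t₀ s| * g s ≤ Φ s * g s := mul_le_mul_of_nonneg_right h1 h2
    _ = g s * Φ s := mul_comm _ _
  -- J ≥ 1/M
  set J := ∫ s in Icc a b, k t₀ s * g s with hJ_def
  have hbdd_below : BddBelow ((fun t => ∫ s in Icc a b, k t s * g s) '' Icc a b) := by
    refine ⟨0, ?_⟩
    rintro x ⟨t, ht, rfl⟩
    refine integral_nonneg_of_ae ?_
    filter_upwards [ae_restrict_of_ae_restrict_of_subset hab01 (h.k_ge t ht),
      hg, ae_restrict_of_ae_restrict_of_subset hab01 hΦ0] with s h1 h2 h3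
    exact mul_nonneg (le_trans (mul_nonneg h.c_pos.le h3) h1) h2
  have hJ : 1 / M ≤ J := by
    rw [hM']
    exact csInf_le hbdd_below ⟨t₀, ht₀, rfl⟩
  have hJpos : 0 < J := lt_of_lt_of_le hMpos hJ
  -- the integrand F and comparison G
  set F := fun s => k t₀ s * g s * ψ s with hF_def
  set G := fun s => k t₀ s * g s * (M * w s) with hG_def
  -- F is integrable on [0,1] (else w t₀ = 0)
  have hInt : IntegrableOn F (Icc (0:ℝ) 1) := by
    by_contra hInt
    have h0 := heq t₀ (hab01 ht₀)
    rw [integral_undef hInt] at h0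
    exact hm.ne' (hm_def.trans h0)
  have hIntab : IntegrableOn F (Icc a b) := hInt.mono_set hab01
  -- F is a.e. nonneg on [0,1]
  have hF0 : 0 ≤ᵐ[volume.restrict (Icc (0:ℝ) 1)] F := by
    filter_upwards [hkg0_01] with s h1
    exact mul_nonneg h1 (hψ0 s)
  -- G is integrable on [a,b]
  have hwmeas : AEMeasurable w (volume.restrict (Icc a b)) := by
    have : AEMeasurable w (volume.restrict (Icc (0:ℝ) 1)) :=
      (hwcont.aemeasurable measurableSet_Icc)
    exact (hwcont.mono hab01).aemeasurable measurableSet_Icc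
  have hG_int : IntegrableOn G (Icc a b) := by
    refine Integrable.mono' ((hgΦab.const_mul (M * supNorm w))) ?_ ?_
    · exact (hkgmeas.aemeasurable.mul (hwmeas.const_mul M)).aestronglyMeasurable
    · filter_upwards [hkle, hg, ae_restrict_of_ae_restrict_of_subset hab01 hΦ0,
        hmem_ab] with s h1 h2 h3 h4
      have hw : |w s| ≤ supNorm w := hle s (hab01 h4)
      have h5 : |k t₀ s * g s * (M * w s)| = |k t₀ s| * g s * (M * |w s|) := by
        rw [abs_mul, abs_mul, abs_mul, abs_of_nonneg h2, abs_of_pos hM]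
      rw [Real.norm_eq_abs, h5]
      have : |k t₀ s| * g s * (M * |w s|) ≤ Φ s * g s * (M * supNorm w) := by
        have hkΦ : |k t₀ s| * g s ≤ Φ s * g s := mul_le_mul_of_nonneg_right h1 h2
        have hMw : M * |w s| ≤ M * supNorm w := mul_le_mul_of_nonneg_left hw hM.le
        exact mul_le_mul hkΦ hMw (mul_nonneg hM.le (abs_nonneg _))
          (mul_nonneg h3 h2)
      linarith [this]
  -- constant lower comparison: kg * (M*m)
  have hconst_int : IntegrableOn (fun s => k t₀ s * g s * (M * m)) (Icc a b) :=
    hkg_int.mul_const (M * m)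
  -- chain of inequalities
  have step1 : m = ∫ s in Icc (0:ℝ) 1, F s := heq t₀ (hab01 ht₀)
  have step2 : (∫ s in Icc a b, F s) ≤ ∫ s in Icc (0:ℝ) 1, F s :=
    setIntegral_mono_set hInt hF0 (HasSubset.Subset.eventuallyLE hab01)
  have hGF : G ≤ᵐ[volume.restrict (Icc a b)] F := by
    filter_upwards [hkg0, hmem_ab] with s h1 h2
    exact mul_le_mul_of_nonneg_left (hψ s h2).le h1
  have step3 : (∫ s in Icc a b, G s) ≤ ∫ s in Icc a b, F s :=
    integral_mono_ae hG_int hIntab hGF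
  have step4 : J * (M * m) ≤ ∫ s in Icc a b, G s := by
    have : (∫ s in Icc a b, k t₀ s * g s * (M * m)) ≤ ∫ s in Icc a b, G s := by
      refine integral_mono_ae hconst_int hG_int ?_
      filter_upwards [hkg0, hmem_ab] with s h1 h2
      exact mul_le_mul_of_nonneg_left
        (mul_le_mul_of_nonneg_left (hmin s h2) hM.le) h1
    rwa [integral_mul_const] at this
  have step5 : m ≤ J * (M * m) := by
    have h1 : (1 / M) * (M * m) ≤ J * (M * m) :=
      mul_le_mul_of_nonneg_right hJ (mul_pos hM hm).le
    have h2 : (1 / M) * (M * m) = m := by field_simp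
    linarith
  -- all equalities
  have heqFG : (∫ s in Icc a b, F s) = ∫ s in Icc a b, G s := by linarith
  -- F - G vanishes a.e. on [a,b]
  have hsub0 : (fun s => F s - G s) =ᵐ[volume.restrict (Icc a b)] 0 := by
    have hnn : 0 ≤ᵐ[volume.restrict (Icc a b)] (fun s => F s - G s) := by
      filter_upwards [hGF] with s hs; simpa using hs
    have hint : Integrable (fun s => F s - G s) (volume.restrict (Icc a b)) :=
      hIntab.sub hG_int
    refine (integral_eq_zero_iff_of_nonneg_ae hnn hint).mp ?_
    rw [integral_sub hIntab hG_int, heqFG, sub_self]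
  -- hence kg = 0 a.e. on [a,b]
  have hkg_zero : (fun s => k t₀ s * g s) =ᵐ[volume.restrict (Icc a b)] 0 := by
    filter_upwards [hsub0, hmem_ab] with s hs h2
    have hz : F s - G s = 0 := by simpa using hs
    have hfac : (k t₀ s * g s) * (ψ s - M * w s) = 0 := by
      simp only [hF_def, hG_def] at hz; linear_combination hz
    rcases mul_eq_zero.mp hfac with h | h
    · simpa using h
    · exact absurd h (by have := hψ s h2; intro hh; linarith)
  have : J = 0 := by
    rw [hJ_def, integral_congr_ae hkg_zero]
    simp
  linarith

/-- if `fᵢ(t,u₁,u₂) > Mᵢ uᵢ` for `t ∈ [aᵢ,bᵢ]` and `uᵢ > 0`, where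
`1/Mᵢ = inf_{t∈[aᵢ,bᵢ]} ∫_{aᵢ}^{bᵢ} kᵢ(t,s) gᵢ(s) ds > 0`, then the Hammerstein
system has no nontrivial solution in the cone `K`. -/
theorem stmt5 (k₁ k₂ : ℝ → ℝ → ℝ) (g₁ g₂ Φ₁ Φ₂ : ℝ → ℝ)
    (f₁ f₂ : ℝ → ℝ → ℝ → ℝ) (a₁ b₁ c₁ a₂ b₂ c₂ M₁ M₂ : ℝ)
    (h₁ : Standing k₁ g₁ Φ₁ f₁ a₁ b₁ c₁)
    (h₂ : Standing k₂ g₂ Φ₂ f₂ a₂ b₂ c₂)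
    (hM₁ : 0 < M₁)
    (hM₁' : 1 / M₁ = sInf ((fun t => ∫ s in Icc a₁ b₁, k₁ t s * g₁ s) '' Icc a₁ b₁))
    (hM₂ : 0 < M₂)
    (hM₂' : 1 / M₂ = sInf ((fun t => ∫ s in Icc a₂ b₂, k₂ t s * g₂ s) '' Icc a₂ b₂))
    (hM₁pos : 0 < 1 / M₁) (hM₂pos : 0 < 1 / M₂)
    (hf₁ : ∀ t ∈ Icc a₁ b₁, ∀ u₁ u₂ : ℝ, 0 < u₁ → M₁ * u₁ < f₁ t u₁ u₂)
    (hf₂ : ∀ t ∈ Icc a₂ b₂, ∀ u₁ u₂ : ℝ, 0 < u₂ → M₂ * u₂ < f₂ t u₁ u₂) :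
    ¬ ∃ u v : ℝ → ℝ, inCone a₁ b₁ c₁ u ∧ inCone a₂ b₂ c₂ v ∧
      (∀ t ∈ Icc (0:ℝ) 1, u t = Ham k₁ g₁ f₁ u v t ∧ v t = Ham k₂ g₂ f₂ u v t) ∧
      (supNorm u ≠ 0 ∨ supNorm v ≠ 0) := by
  rintro ⟨u, v, hu, hv, hsol, hnz⟩
  rcases hnz with hnz | hnz
  · have upos : ∀ s ∈ Icc a₁ b₁, 0 < u s := fun s hs =>
      lt_of_lt_of_le (mul_pos h₁.c_pos
        (lt_of_le_of_ne (le_trans (abs_nonneg _)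
          (le_csSup (isCompact_Icc.bddAbove_image hu.1.abs)
            ⟨0, ⟨le_refl _, zero_le_one⟩, rfl⟩)) (Ne.symm hnz))) (hu.2 s hs)
    exact aux_no_sol h₁ hM₁ hM₁pos hM₁' hu hnz
      (fun s hs => hf₁ s hs (u s) (v s) (upos s hs))
      (fun s => h₁.f_nonneg s (u s) (v s))
      (fun t ht => (hsol t ht).1)
  · have vpos : ∀ s ∈ Icc a₂ b₂, 0 < v s := fun s hs =>
      lt_of_lt_of_le (mul_pos h₂.c_pos
        (lt_of_le_of_ne (le_trans (abs_nonneg _)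
          (le_csSup (isCompact_Icc.bddAbove_image hv.1.abs)
            ⟨0, ⟨le_refl _, zero_le_one⟩, rfl⟩)) (Ne.symm hnz))) (hv.2 s hs)
    exact aux_no_sol h₂ hM₂ hM₂pos hM₂' hv hnz
      (fun s hs => hf₂ s hs (u s) (v s) (vpos s hs))
      (fun s => h₂.f_nonneg s (u s) (v s))
      (fun t ht => (hsol t ht).2)
end

section
/- If there exist λ ≥ 1 and (u,v) ∈ K with ‖u‖_∞ = ρ₁, ‖v‖_∞ ≤ ρ₂ and λ(u,v) = T(u,v), and if sup{f₁(t,u,v)/ρ₁ : t ∈ [0,1], |u| ≤ ρ₁, |v| ≤ ρ₂} < m₁ where 1/m₁ = sup_{t∈[0,1]} ∫₀¹ |k₁(t,s)| g₁(s) ds, then a contradiction follows; consequently λ(u,v) ≠ T(u,v) for all (u,v) ∈ ∂K_{ρ₁,ρ₂} and λ ≥ 1 whenever the analogous bound holds for both f₁ and f₂. -/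
open MeasureTheory Set

/-- The sup norm of a continuous function on `[0,1]` is attained. -/
lemma supNorm_exists {w : ℝ → ℝ} (hw : ContinuousOn w (Icc (0:ℝ) 1)) :
    ∃ t ∈ Icc (0:ℝ) 1, supNorm w = |w t| ∧ ∀ s ∈ Icc (0:ℝ) 1, |w s| ≤ |w t| := by
  obtain ⟨t, ht, hmax⟩ := isCompact_Icc.exists_isMaxOn (nonempty_Icc.mpr zero_le_one) hw.abs
  have hmax' : ∀ s ∈ Icc (0:ℝ) 1, |w s| ≤ |w t| := fun s hs => hmax hs
  refine ⟨t, ht, ?_, hmax'⟩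
  refine IsGreatest.csSup_eq ⟨⟨t, ht, rfl⟩, ?_⟩
  rintro x ⟨s, hs, rfl⟩; exact hmax' s hs

/-- Carathéodory composition: a function measurable in `t` and a.e. continuous in the
other variables, composed with continuous functions, is a.e. measurable. -/
lemma cara {f : ℝ → ℝ → ℝ → ℝ}
    (hmeas : ∀ p q : ℝ, Measurable fun t => f t p q)
    (hcont : ∀ᵐ t ∂(volume.restrict (Icc (0:ℝ) 1)), Continuous fun p : ℝ × ℝ => f t p.1 p.2)
    {u v : ℝ → ℝ} (hu : ContinuousOn u (Icc (0:ℝ) 1)) (hv : ContinuousOn v (Icc (0:ℝ) 1)) :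
    AEMeasurable (fun s => f s (u s) (v s)) (volume.restrict (Icc (0:ℝ) 1)) := by
  classical
  have hnull : (volume.restrict (Icc (0:ℝ) 1))
      {t | ¬ Continuous fun p : ℝ × ℝ => f t p.1 p.2} = 0 := hcont
  obtain ⟨N, hsub, hNm, hN0⟩ := exists_measurable_superset_of_null hnull
  have hU : Measurable (Function.uncurry
      (fun (p : ℝ × ℝ) (t : ℝ) => if t ∈ N then 0 else f t p.1 p.2)) := by
    refine measurable_uncurry_of_continuous_of_measurable (fun t => ?_) (fun p => ?_)
    · by_cases ht : t ∈ N
      · simpa [ht] using (continuous_const : Continuous fun _ : ℝ × ℝ => (0:ℝ))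
      · have hc : Continuous fun p : ℝ × ℝ => f t p.1 p.2 := by
          by_contra hc; exact ht (hsub hc)
        simpa [ht] using hc
    · exact Measurable.ite hNm measurable_const (hmeas p.1 p.2)
  have hφ : AEMeasurable (fun s => ((u s, v s), s)) (volume.restrict (Icc (0:ℝ) 1)) :=
    ((hu.aemeasurable measurableSet_Icc).prodMk (hv.aemeasurable measurableSet_Icc)).prodMk
      aemeasurable_id
  have h1 : AEMeasurable
      (fun s => Function.uncurry
        (fun (p : ℝ × ℝ) (t : ℝ) => if t ∈ N then 0 else f t p.1 p.2) ((u s, v s), s))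
      (volume.restrict (Icc (0:ℝ) 1)) := hU.comp_aemeasurable hφ
  refine h1.congr ?_
  have : ∀ᵐ s ∂(volume.restrict (Icc (0:ℝ) 1)), s ∉ N := by
    rw [← compl_mem_ae_iff] at hN0
    exact hN0
  filter_upwards [this] with s hs
  simp [Function.uncurry, hs]

/-- Key quantitative lemma for one component of the operator. -/
lemma key_s6 {k : ℝ → ℝ → ℝ} {g Φ : ℝ → ℝ} {f : ℝ → ℝ → ℝ → ℝ} {a b c : ℝ}
    (h : Standing k g Φ f a b c) {m ρ : ℝ} (hρ : 0 < ρ) (hm : 0 < m)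
    (hm' : 1 / m = sSup ((fun t => ∫ s in Icc (0:ℝ) 1, |k t s| * g s) '' Icc (0:ℝ) 1))
    {F : ℝ → ℝ} (hF0 : ∀ s, 0 ≤ F s)
    (hFmeas : AEMeasurable F (volume.restrict (Icc (0:ℝ) 1)))
    (hFlt : ∀ s ∈ Icc (0:ℝ) 1, F s < m * ρ)
    {lam : ℝ} (hlam : 1 ≤ lam) {w : ℝ → ℝ}
    (heq : ∀ t ∈ Icc (0:ℝ) 1, lam * w t = ∫ s in Icc (0:ℝ) 1, k t s * g s * F s) :
    ∀ t ∈ Icc (0:ℝ) 1, |w t| < ρ := by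
  have hmρ : 0 < m * ρ := mul_pos hm hρ
  have hgΦ : IntegrableOn (fun s => g s * Φ s) (Icc (0:ℝ) 1) := h.gΦ_int
  have hkm : ∀ t : ℝ, Measurable fun s => |k t s| * g s := fun t =>
    ((h.k_meas.comp (measurable_const.prodMk measurable_id)).abs).mul h.g_meas
  have hWle : ∀ t ∈ Icc (0:ℝ) 1,
      (fun s => |k t s| * g s) ≤ᵐ[volume.restrict (Icc (0:ℝ) 1)] fun s => g s * Φ s := by
    intro t ht
    filter_upwards [h.k_le t ht, h.g_nonneg] with s h1 h2
    calc |k t s| * g s ≤ Φ s * g s := mul_le_mul_of_nonneg_right h1 h2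
    _ = g s * Φ s := mul_comm _ _
  have hW0 : ∀ t : ℝ,
      (0:ℝ → ℝ) ≤ᵐ[volume.restrict (Icc (0:ℝ) 1)] fun s => |k t s| * g s := by
    intro t; filter_upwards [h.g_nonneg] with s h2
    exact mul_nonneg (abs_nonneg _) h2
  have hWint : ∀ t ∈ Icc (0:ℝ) 1, IntegrableOn (fun s => |k t s| * g s) (Icc (0:ℝ) 1) := by
    intro t ht
    refine hgΦ.mono' ((hkm t).aestronglyMeasurable) ?_
    filter_upwards [hWle t ht, hW0 t] with s h1 h2
    rwa [Real.norm_eq_abs, abs_of_nonneg h2]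
  have hIle : ∀ t ∈ Icc (0:ℝ) 1,
      (∫ s in Icc (0:ℝ) 1, |k t s| * g s) ≤ ∫ s in Icc (0:ℝ) 1, g s * Φ s := fun t ht =>
    integral_mono_of_nonneg (hW0 t) hgΦ (hWle t ht)
  intro t ht
  have hI_le : (∫ s in Icc (0:ℝ) 1, |k t s| * g s) ≤ 1 / m := by
    rw [hm']
    exact le_csSup ⟨∫ s in Icc (0:ℝ) 1, g s * Φ s,
      by rintro x ⟨t', ht', rfl⟩; exact hIle t' ht'⟩ ⟨t, ht, rfl⟩
  have hI0 : 0 ≤ ∫ s in Icc (0:ℝ) 1, |k t s| * g s := integral_nonneg_of_ae (hW0 t)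
  -- integrability of the integrand
  have hWF_meas : AEMeasurable (fun s => (|k t s| * g s) * F s)
      (volume.restrict (Icc (0:ℝ) 1)) := (hkm t).aemeasurable.mul hFmeas
  have hWF_le : ∀ᵐ s ∂(volume.restrict (Icc (0:ℝ) 1)),
      ‖(|k t s| * g s) * F s‖ ≤ g s * Φ s * (m * ρ) := by
    filter_upwards [hWle t ht, hW0 t, ae_restrict_mem measurableSet_Icc] with s h1 h2 h3
    rw [Real.norm_eq_abs, abs_of_nonneg (mul_nonneg h2 (hF0 s))]
    exact mul_le_mul h1 (le_of_lt (hFlt s h3)) (hF0 s) (le_trans h2 h1)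
  have hWFint : IntegrableOn (fun s => (|k t s| * g s) * F s) (Icc (0:ℝ) 1) :=
    (hgΦ.mul_const (m * ρ)).mono' hWF_meas.aestronglyMeasurable hWF_le
  have hWF0 : (0:ℝ → ℝ) ≤ᵐ[volume.restrict (Icc (0:ℝ) 1)]
      fun s => (|k t s| * g s) * F s := by
    filter_upwards [hW0 t] with s h2
    exact mul_nonneg h2 (hF0 s)
  -- |w t| ≤ ∫ W F
  have hA : |w t| ≤ ∫ s in Icc (0:ℝ) 1, (|k t s| * g s) * F s := by
    have h2 : |lam * w t| = lam * |w t| := by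
      rw [abs_mul, abs_of_nonneg (le_trans zero_le_one hlam)]
    have h3 : |w t| ≤ lam * |w t| := le_mul_of_one_le_left (abs_nonneg _) hlam
    have h4 : |∫ s in Icc (0:ℝ) 1, k t s * g s * F s| ≤
        ∫ s in Icc (0:ℝ) 1, (|k t s| * g s) * F s := by
      calc |∫ s in Icc (0:ℝ) 1, k t s * g s * F s|
          ≤ ∫ s in Icc (0:ℝ) 1, ‖k t s * g s * F s‖ := by
            rw [← Real.norm_eq_abs]; exact norm_integral_le_integral_norm _
        _ = ∫ s in Icc (0:ℝ) 1, (|k t s| * g s) * F s := by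
            refine integral_congr_ae ?_
            filter_upwards [h.g_nonneg] with s hg
            rw [Real.norm_eq_abs, abs_mul, abs_mul, abs_of_nonneg hg,
              abs_of_nonneg (hF0 s)]
    calc |w t| ≤ lam * |w t| := h3
      _ = |lam * w t| := h2.symm
      _ = |∫ s in Icc (0:ℝ) 1, k t s * g s * F s| := by rw [heq t ht]
      _ ≤ _ := h4
  have hint_mρ : (∫ s in Icc (0:ℝ) 1, (|k t s| * g s) * (m * ρ)) =
      (∫ s in Icc (0:ℝ) 1, |k t s| * g s) * (m * ρ) := integral_mul_const _ _
  have hle2 : (∫ s in Icc (0:ℝ) 1, (|k t s| * g s) * F s) ≤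
      (∫ s in Icc (0:ℝ) 1, |k t s| * g s) * (m * ρ) := by
    rw [← hint_mρ]
    refine integral_mono_of_nonneg hWF0 ((hWint t ht).mul_const _) ?_
    filter_upwards [hW0 t, ae_restrict_mem measurableSet_Icc] with s h2 h3
    exact mul_le_mul_of_nonneg_left (le_of_lt (hFlt s h3)) h2
  have hρ_le : (∫ s in Icc (0:ℝ) 1, |k t s| * g s) * (m * ρ) ≤ ρ := by
    calc (∫ s in Icc (0:ℝ) 1, |k t s| * g s) * (m * ρ) ≤ (1 / m) * (m * ρ) :=
        mul_le_mul_of_nonneg_right hI_le (le_of_lt hmρ)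
      _ = ρ := by field_simp
  rcases eq_or_lt_of_le hI0 with hIz | hIpos
  · -- the weight integrates to zero
    have : (∫ s in Icc (0:ℝ) 1, (|k t s| * g s) * F s) ≤ 0 := by
      calc (∫ s in Icc (0:ℝ) 1, (|k t s| * g s) * F s)
          ≤ (∫ s in Icc (0:ℝ) 1, |k t s| * g s) * (m * ρ) := hle2
        _ = 0 := by rw [← hIz]; ring
    linarith
  · -- strict inequality in the integral
    have hD0 : (0:ℝ → ℝ) ≤ᵐ[volume.restrict (Icc (0:ℝ) 1)]
        fun s => (|k t s| * g s) * (m * ρ - F s) := by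
      filter_upwards [hW0 t, ae_restrict_mem measurableSet_Icc] with s h2 h3
      exact mul_nonneg h2 (sub_nonneg.2 (le_of_lt (hFlt s h3)))
    have hDint : IntegrableOn (fun s => (|k t s| * g s) * (m * ρ - F s)) (Icc (0:ℝ) 1) := by
      refine (((hWint t ht).mul_const (m * ρ)).sub hWFint).congr ?_
      filter_upwards [] with s
      simp only [Pi.sub_apply]
      ring
    have hDsub : (∫ s in Icc (0:ℝ) 1, (|k t s| * g s) * (m * ρ - F s)) =
        (∫ s in Icc (0:ℝ) 1, |k t s| * g s) * (m * ρ) -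
          ∫ s in Icc (0:ℝ) 1, (|k t s| * g s) * F s := by
      rw [← hint_mρ, ← integral_sub ((hWint t ht).mul_const (m * ρ)) hWFint]
      refine integral_congr_ae ?_
      filter_upwards [] with s
      ring
    have hDpos : 0 < ∫ s in Icc (0:ℝ) 1, (|k t s| * g s) * (m * ρ - F s) := by
      rw [setIntegral_pos_iff_support_of_nonneg_ae hD0 hDint]
      have hWpos := (setIntegral_pos_iff_support_of_nonneg_ae (hW0 t) (hWint t ht)).mp hIpos
      refine lt_of_lt_of_le hWpos (measure_mono ?_)
      rintro s ⟨hsupp, hsIcc⟩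
      refine ⟨?_, hsIcc⟩
      intro hzero
      rcases mul_eq_zero.mp hzero with hz | hz
      · exact hsupp hz
      · have := hFlt s hsIcc
        have : m * ρ - F s > 0 := by linarith
        linarith
    linarith

/-- if `sup{fᵢ(t,u,v)/ρᵢ : t ∈ [0,1], |u| ≤ ρ₁, |v| ≤ ρ₂} < mᵢ`
(with `1/mᵢ = sup_{t∈[0,1]} ∫₀¹ |kᵢ(t,s)| gᵢ(s) ds`) for `i = 1,2`, then
`λ(u,v) ≠ T(u,v)` for every `(u,v) ∈ ∂K_{ρ₁,ρ₂}` and every `λ ≥ 1`; in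
particular no `λ ≥ 1` and `(u,v) ∈ K` with `‖u‖_∞ = ρ₁`, `‖v‖_∞ ≤ ρ₂` (or
`‖u‖_∞ ≤ ρ₁`, `‖v‖_∞ = ρ₂`) can satisfy `λ(u,v) = T(u,v)`. -/
theorem stmt6 (k₁ k₂ : ℝ → ℝ → ℝ) (g₁ g₂ Φ₁ Φ₂ : ℝ → ℝ)
    (f₁ f₂ : ℝ → ℝ → ℝ → ℝ) (a₁ b₁ c₁ a₂ b₂ c₂ m₁ m₂ ρ₁ ρ₂ : ℝ)
    (h₁ : Standing k₁ g₁ Φ₁ f₁ a₁ b₁ c₁)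
    (h₂ : Standing k₂ g₂ Φ₂ f₂ a₂ b₂ c₂)
    (hρ₁ : 0 < ρ₁) (hρ₂ : 0 < ρ₂)
    (hm₁ : 0 < m₁)
    (hm₁' : 1 / m₁ = sSup ((fun t => ∫ s in Icc (0:ℝ) 1, |k₁ t s| * g₁ s) '' Icc (0:ℝ) 1))
    (hm₂ : 0 < m₂)
    (hm₂' : 1 / m₂ = sSup ((fun t => ∫ s in Icc (0:ℝ) 1, |k₂ t s| * g₂ s) '' Icc (0:ℝ) 1))
    (hf₁ : ∀ t ∈ Icc (0:ℝ) 1, ∀ u v : ℝ, |u| ≤ ρ₁ → |v| ≤ ρ₂ →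
      f₁ t u v / ρ₁ < m₁)
    (hf₂ : ∀ t ∈ Icc (0:ℝ) 1, ∀ u v : ℝ, |u| ≤ ρ₁ → |v| ≤ ρ₂ →
      f₂ t u v / ρ₂ < m₂) :
    ¬ ∃ lam : ℝ, 1 ≤ lam ∧ ∃ u v : ℝ → ℝ,
      inCone a₁ b₁ c₁ u ∧ inCone a₂ b₂ c₂ v ∧
      ((supNorm u = ρ₁ ∧ supNorm v ≤ ρ₂) ∨ (supNorm u ≤ ρ₁ ∧ supNorm v = ρ₂)) ∧
      (∀ t ∈ Icc (0:ℝ) 1,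
        lam * u t = Ham k₁ g₁ f₁ u v t ∧ lam * v t = Ham k₂ g₂ f₂ u v t) := by
  rintro ⟨lam, hlam, u, v, ⟨hu_cont, -⟩, ⟨hv_cont, -⟩, hcase, heq⟩
  obtain ⟨tu, htu, hsu, hbu⟩ := supNorm_exists hu_cont
  obtain ⟨tv, htv, hsv, hbv⟩ := supNorm_exists hv_cont
  have hρu : supNorm u ≤ ρ₁ := by rcases hcase with ⟨h, -⟩ | ⟨h, -⟩ <;> simp [h]
  have hρv : supNorm v ≤ ρ₂ := by rcases hcase with ⟨-, h⟩ | ⟨-, h⟩ <;> simp [h]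
  have hub : ∀ s ∈ Icc (0:ℝ) 1, |u s| ≤ ρ₁ := fun s hs =>
    (hbu s hs).trans (by rw [← hsu]; exact hρu)
  have hvb : ∀ s ∈ Icc (0:ℝ) 1, |v s| ≤ ρ₂ := fun s hs =>
    (hbv s hs).trans (by rw [← hsv]; exact hρv)
  rcases hcase with ⟨hρu', -⟩ | ⟨-, hρv'⟩
  · -- first component
    have hFmeas := cara h₁.f_meas h₁.f_cont hu_cont hv_cont
    have hFlt : ∀ s ∈ Icc (0:ℝ) 1, f₁ s (u s) (v s) < m₁ * ρ₁ := fun s hs => by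
      have := hf₁ s hs (u s) (v s) (hub s hs) (hvb s hs)
      rw [div_lt_iff₀ hρ₁] at this
      linarith [this]
    have heq' : ∀ t ∈ Icc (0:ℝ) 1,
        lam * u t = ∫ s in Icc (0:ℝ) 1, k₁ t s * g₁ s * f₁ s (u s) (v s) := fun t ht =>
      (heq t ht).1
    have hkey := key_s6 h₁ hρ₁ hm₁ hm₁' (fun s => h₁.f_nonneg s (u s) (v s)) hFmeas hFlt hlam heq'
    have h5 := hkey tu htu
    rw [← hsu, hρu'] at h5
    exact lt_irrefl _ h5
  · -- second component
    have hFmeas := cara h₂.f_meas h₂.f_cont hu_cont hv_cont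
    have hFlt : ∀ s ∈ Icc (0:ℝ) 1, f₂ s (u s) (v s) < m₂ * ρ₂ := fun s hs => by
      have := hf₂ s hs (u s) (v s) (hub s hs) (hvb s hs)
      rw [div_lt_iff₀ hρ₂] at this
      linarith [this]
    have heq' : ∀ t ∈ Icc (0:ℝ) 1,
        lam * v t = ∫ s in Icc (0:ℝ) 1, k₂ t s * g₂ s * f₂ s (u s) (v s) := fun t ht =>
      (heq t ht).2
    have hkey := key_s6 h₂ hρ₂ hm₂ hm₂' (fun s => h₂.f_nonneg s (u s) (v s)) hFmeas hFlt hlam heq'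
    have h5 := hkey tv htv
    rw [← hsv, hρv'] at h5
    exact lt_irrefl _ h5
end

section
/- Let L₁ be the linear operator on C[0,1] given by L₁u(t) = ∫₀¹ |k₁(t,s)| g₁(s) u(s) ds, and suppose there is ε > 0 with f₁(t,u,v) ≤ (μ(L₁) − ε)|u| for all (t,u,v) ∈ [0,1]×[−ρ₀,ρ₀]², where μ(L₁) = 1/r(L₁) is the reciprocal of the spectral radius of L₁. If (u,v) ∈ K with ‖u‖_∞ ≤ ρ₀, ‖v‖_∞ ≤ ρ₀ and λ(u,v) = T(u,v) for some λ ≥ 1, then u = 0. (Key step: |u(t)| ≤ (μ(L₁)−ε)ⁿ L₁ⁿ|u|(t) for all n, forcing 1 ≤ (μ(L₁)−ε)/μ(L₁) < 1 if u ≠ 0.) -/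
open MeasureTheory Set

abbrev I01 : Set ℝ := Set.Icc (0:ℝ) 1

/-- The cone K̃ inside C([0,1],ℝ). -/
def coneCM (a b c : ℝ) : Set C(I01, ℝ) :=
  {w | ∀ t : I01, a ≤ (t:ℝ) → (t:ℝ) ≤ b → c * ‖w‖ ≤ w t}

/-!
Put `w = |u|` and `q = μ - ε`. The fixed-point equation and the bound on `f₁` give `w ≤ q • L₁ w`,
and `q · r(L₁) < 1`. Positivity of `L₁` then forces `w = 0` through its resolvent: in a Banach
algebra, a closed subsemiring stable under nonnegative scalars contains `(l - T)⁻¹` for `T` in it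
and `l > ‖T‖` (Neumann series), and the identity
`(l - T)⁻¹ = ∑ ((l₀ - l) (l₀ - T)⁻¹)ⁿ (l₀ - T)⁻¹` for `l ≤ l₀` near `l₀` pushes this down to every
`l` above the real spectral radius. With `l = 1/q` one gets `w = -(l - L₁)⁻¹ (L₁ w - l w) ≤ 0`.
This avoids the iteration `w ≤ qⁿ L₁ⁿ w`, which would need Gelfand's formula for the real spectrum.
-/

open Filter

namespace Subsemiring

variable {A : Type*} [NormedRing A] [CompleteSpace A] {S : Subsemiring A}

theorem tsum_geometric_mem (hS : IsClosed (S : Set A)) {x : A} (hx : ‖x‖ < 1) (hxS : x ∈ S) :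
    ∑' n, x ^ n ∈ S :=
  hS.mem_of_tendsto (summable_geometric_of_norm_lt_one hx).hasSum
    (Eventually.of_forall fun _ => sum_mem fun n _ => pow_mem hxS n)

variable [NormedAlgebra ℝ A]

theorem resolvent_mem_of_norm_lt (hS : IsClosed (S : Set A))
    (hS_smul : ∀ c : ℝ, 0 ≤ c → ∀ x ∈ S, c • x ∈ S) {a : A} (ha : a ∈ S) {l : ℝ}
    (hl : ‖a‖ < l) : resolvent a l ∈ S := by
  have hl₀ : 0 < l := (norm_nonneg a).trans_lt hl
  have hx : ‖l⁻¹ • a‖ < 1 := by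
    rwa [norm_smul, norm_inv, Real.norm_of_nonneg hl₀.le, inv_mul_lt_one₀ hl₀]
  have hneumann : l • resolvent a l = ∑' n, (l⁻¹ • a) ^ n := by
    simpa [geom_series_eq_inverse _ hx, resolvent, Units.smul_def] using
      spectrum.units_smul_resolvent_self (r := Units.mk0 l hl₀.ne') (a := a)
  rw [← inv_smul_smul₀ hl₀.ne' (resolvent a l), hneumann]
  exact hS_smul _ (inv_nonneg.2 hl₀.le) _
    (tsum_geometric_mem hS hx (hS_smul _ (inv_nonneg.2 hl₀.le) _ ha))

theorem resolvent_mem_of_le (hS : IsClosed (S : Set A))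
    (hS_smul : ∀ c : ℝ, 0 ≤ c → ∀ x ∈ S, c • x ∈ S) {a : A} {l₀ l : ℝ}
    (hl₀ : l₀ ∈ resolventSet ℝ a) (hR : resolvent a l₀ ∈ S) (hl : l ≤ l₀)
    (hsmall : (l₀ - l) * ‖resolvent a l₀‖ < 1) : resolvent a l ∈ S := by
  set R := resolvent a l₀
  set y := (l₀ - l) • R
  have hy : ‖y‖ < 1 := by rwa [norm_smul, Real.norm_of_nonneg (sub_nonneg.2 hl)]
  have hcR : (algebraMap ℝ A l₀ - a) * R = 1 := Ring.mul_inverse_cancel _ hl₀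
  have hRc : R * (algebraMap ℝ A l₀ - a) = 1 := Ring.inverse_mul_cancel _ hl₀
  have hfac : algebraMap ℝ A l - a = (algebraMap ℝ A l₀ - a) * (1 - y) := by
    rw [mul_sub, mul_one, mul_smul_comm, hcR, Algebra.algebraMap_eq_smul_one,
      Algebra.algebraMap_eq_smul_one, sub_smul]
    abel
  have hcomm_R : Commute (algebraMap ℝ A l₀ - a) R := hcR.trans hRc.symm
  have hcomm : Commute (algebraMap ℝ A l₀ - a) (1 - y) :=
    (Commute.one_right _).sub_right (hcomm_R.smul_right _)
  have hformula : resolvent a l = (∑' n, y ^ n) * R := by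
    rw [resolvent, hfac, Ring.mul_inverse_rev' hcomm, geom_series_eq_inverse _ hy]
    rfl
  rw [hformula]
  exact mul_mem (tsum_geometric_mem hS hy (hS_smul _ (sub_nonneg.2 hl) _ hR)) hR

theorem resolvent_mem_of_Ici_subset (hS : IsClosed (S : Set A))
    (hS_smul : ∀ c : ℝ, 0 ≤ c → ∀ x ∈ S, c • x ∈ S) {a : A} (ha : a ∈ S) {l : ℝ}
    (hρ : Set.Ici l ⊆ resolventSet ℝ a) : resolvent a l ∈ S := by
  set M := max l (‖a‖ + 1)
  have hcont : ContinuousOn (fun x : ℝ => resolvent a (-x)) (Set.Icc (-M) (-l)) := by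
    have hR : ContinuousOn (resolvent a) (resolventSet ℝ a) := fun k hk =>
      (spectrum.hasDerivAt_resolvent_const_left hk).continuousAt.continuousWithinAt
    exact hR.comp continuous_neg.continuousOn fun x hx => hρ (le_neg.2 hx.2)
  -- continuous induction runs upwards, so it is run on `-l` starting from `-M`
  suffices Set.Icc (-M) (-l) ⊆ {x | resolvent a (-x) ∈ S} by
    simpa using this ⟨neg_le_neg (le_max_left _ _), le_rfl⟩
  refine IsClosed.Icc_subset_of_forall_mem_nhdsWithin ?_ ?_ ?_
  · rw [Set.inter_comm]
    exact hcont.preimage_isClosed_of_isClosed isClosed_Icc hS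
  · simpa using resolvent_mem_of_norm_lt hS hS_smul ha (lt_max_of_lt_right (lt_add_one _))
  · rintro x ⟨hxS, hx⟩
    set N := ‖resolvent a (-x)‖ + 1
    have hN : 0 < N := by positivity
    filter_upwards [Ico_mem_nhdsGT (lt_add_of_pos_right x (inv_pos.2 hN))] with y hy
    refine resolvent_mem_of_le hS hS_smul (hρ (le_neg.2 hx.2.le)) hxS (neg_le_neg hy.1) ?_
    calc (-x - -y) * ‖resolvent a (-x)‖ ≤ (y - x) * N := by
          rw [neg_sub_neg]
          exact mul_le_mul_of_nonneg_left (lt_add_one _).le (by linarith [hy.1])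
      _ < N⁻¹ * N := by gcongr; linarith [hy.2]
      _ = 1 := inv_mul_cancel₀ hN.ne'

theorem resolvent_mem_of_spectralRadius_lt (hS : IsClosed (S : Set A))
    (hS_smul : ∀ c : ℝ, 0 ≤ c → ∀ x ∈ S, c • x ∈ S) {a : A} (ha : a ∈ S) {l : ℝ}
    (hl : spectralRadius ℝ a < ENNReal.ofReal l) : resolvent a l ∈ S :=
  resolvent_mem_of_Ici_subset hS hS_smul ha fun m hm =>
    spectrum.mem_resolventSet_of_spectralRadius_lt <| hl.trans_le <| by
      rw [← enorm_eq_nnnorm, Real.enorm_eq_ofReal_abs]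
      exact ENNReal.ofReal_le_ofReal (le_trans hm (le_abs_self m))

end Subsemiring

section PositiveOperators

variable (X : Type*) [TopologicalSpace X] [CompactSpace X]

def positiveOps : Subsemiring (C(X, ℝ) →L[ℝ] C(X, ℝ)) where
  carrier := {T | ∀ w, 0 ≤ w → 0 ≤ T w}
  mul_mem' hS hT w hw := hS _ (hT w hw)
  one_mem' _ hw := hw
  add_mem' hS hT w hw := add_nonneg (hS w hw) (hT w hw)
  zero_mem' _ _ := le_rfl

variable {X}

theorem isClosed_positiveOps : IsClosed (positiveOps X : Set (C(X, ℝ) →L[ℝ] C(X, ℝ))) := by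
  have hrw : (positiveOps X : Set (C(X, ℝ) →L[ℝ] C(X, ℝ))) =
      ⋂ (w : C(X, ℝ)) (_ : 0 ≤ w) (x : X), {T | 0 ≤ T w x} := by
    ext T
    simp [positiveOps, ContinuousMap.le_def]
  rw [hrw]
  exact isClosed_iInter fun w => isClosed_iInter fun _ => isClosed_iInter fun x =>
    isClosed_le continuous_const
      ((continuous_eval_const x).comp (ContinuousLinearMap.apply ℝ C(X, ℝ) w).continuous)

theorem smul_mem_positiveOps {c : ℝ} (hc : 0 ≤ c) {T : C(X, ℝ) →L[ℝ] C(X, ℝ)}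
    (hT : T ∈ positiveOps X) : c • T ∈ positiveOps X :=
  fun w hw => smul_nonneg hc (hT w hw)

theorem eq_zero_of_le_smul_apply {T : C(X, ℝ) →L[ℝ] C(X, ℝ)} (hT : T ∈ positiveOps X)
    {w : C(X, ℝ)} (hw : 0 ≤ w) {q : ℝ} (hwq : w ≤ q • T w)
    (hq : spectralRadius ℝ T * ENNReal.ofReal q < 1) : w = 0 := by
  refine le_antisymm ?_ hw
  rcases le_or_gt q 0 with hq₀ | hq₀
  · exact hwq.trans (smul_nonpos_of_nonpos_of_nonneg hq₀ (hT w hw))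
  have hl : spectralRadius ℝ T < ENNReal.ofReal q⁻¹ := by
    rw [ENNReal.ofReal_inv_of_pos hq₀, ← one_div]
    exact (ENNReal.lt_div_iff_mul_lt (.inl (ENNReal.ofReal_pos.2 hq₀).ne')
      (.inl ENNReal.ofReal_ne_top)).2 hq
  have hR : resolvent T q⁻¹ ∈ positiveOps X :=
    Subsemiring.resolvent_mem_of_spectralRadius_lt (A := C(X, ℝ) →L[ℝ] C(X, ℝ))
      isClosed_positiveOps (fun _ hc _ hT => smul_mem_positiveOps hc hT) hT hl
  have hunit : q⁻¹ ∈ resolventSet ℝ T := spectrum.mem_resolventSet_of_spectralRadius_lt (by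
    rwa [← enorm_eq_nnnorm, Real.enorm_eq_ofReal_abs, abs_of_pos (inv_pos.2 hq₀)])
  have hw_eq : resolvent T q⁻¹ (-(T w - q⁻¹ • w)) = w := by
    have : -(T w - q⁻¹ • w) = (algebraMap ℝ _ q⁻¹ - T) w := by
      simp [Algebra.algebraMap_eq_smul_one]
    rw [this, ← mul_apply_eq_comp, resolvent, Ring.inverse_mul_cancel _ hunit]
    rfl
  have hgap : 0 ≤ T w - q⁻¹ • w := by
    rw [← inv_smul_smul₀ hq₀.ne' (T w), ← smul_sub]
    exact smul_nonneg (inv_nonneg.2 hq₀.le) (sub_nonneg.2 hwq)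
  rw [← hw_eq, map_neg, neg_nonpos]
  exact hR _ hgap

end PositiveOperators

namespace Standing

variable {k : ℝ → ℝ → ℝ} {g Φ : ℝ → ℝ} {f : ℝ → ℝ → ℝ → ℝ} {a b c : ℝ}

theorem integrableOn_abs_kernel_mul (h : Standing k g Φ f a b c) {t : ℝ} (ht : t ∈ Icc (0:ℝ) 1)
    {φ : ℝ → ℝ} (hφ : Measurable φ) {C : ℝ} (hC : ∀ s, |φ s| ≤ C) :
    IntegrableOn (fun s => |k t s| * g s * φ s) (Icc (0:ℝ) 1) := by
  refine Integrable.mono' (h.gΦ_int.const_mul C)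
    (((h.k_meas.of_uncurry_left.abs.mul h.g_meas).mul hφ).aestronglyMeasurable) ?_
  filter_upwards [h.k_le t ht, h.g_nonneg] with s hk hg
  rw [Real.norm_eq_abs, abs_mul, abs_mul, abs_abs, abs_of_nonneg hg]
  calc |k t s| * g s * |φ s| ≤ Φ s * g s * C :=
        mul_le_mul (by gcongr) (hC s) (abs_nonneg _) (mul_nonneg ((abs_nonneg _).trans hk) hg)
    _ = C * (g s * Φ s) := by ring

theorem abs_integral_le (h : Standing k g Φ f a b c) {t : ℝ} (ht : t ∈ Icc (0:ℝ) 1)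
    {φ ψ : ℝ → ℝ} (hφ : Measurable φ) {C : ℝ} (hC : ∀ s, |φ s| ≤ C) {q : ℝ}
    (hfq : ∀ s ∈ Icc (0:ℝ) 1, f s (φ s) (ψ s) ≤ q * |φ s|) :
    |∫ s in Icc (0:ℝ) 1, k t s * g s * f s (φ s) (ψ s)| ≤
      q * ∫ s in Icc (0:ℝ) 1, |k t s| * g s * |φ s| := by
  rw [← integral_const_mul]
  refine abs_integral_le_integral_abs.trans (integral_mono_of_nonneg
    (ae_of_all _ fun s => abs_nonneg _)
    ((h.integrableOn_abs_kernel_mul ht hφ.abs (C := C) (by simpa using hC)).const_mul q) ?_)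
  filter_upwards [ae_restrict_mem measurableSet_Icc, h.g_nonneg] with s hs hg
  rw [abs_mul, abs_mul, abs_of_nonneg hg, abs_of_nonneg (h.f_nonneg _ _ _)]
  calc |k t s| * g s * f s (φ s) (ψ s) ≤ |k t s| * g s * (q * |φ s|) := by
        gcongr; exact hfq s hs
    _ = q * (|k t s| * g s * |φ s|) := by ring

end Standing

theorem stmt7_general (k₁ : ℝ → ℝ → ℝ) (g₁ Φ₁ : ℝ → ℝ)
    (f₁ : ℝ → ℝ → ℝ → ℝ) (a₁ b₁ c₁ : ℝ)
    (h₁ : Standing k₁ g₁ Φ₁ f₁ a₁ b₁ c₁)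
    (L₁ : C(I01, ℝ) →L[ℝ] C(I01, ℝ))
    (hL₁ : ∀ w : C(I01, ℝ), ∀ t : I01, (L₁ w) t =
      ∫ s in Icc (0:ℝ) 1, |k₁ (t:ℝ) s| * g₁ s * w (Set.projIcc (0:ℝ) 1 zero_le_one s))
    (r μ ε ρ₀ : ℝ)
    (hr : spectralRadius ℝ L₁ = ENNReal.ofReal r) (hrpos : 0 < r)
    (hμ : μ = 1 / r) (hε : 0 < ε)
    (hf₁ : ∀ t ∈ Icc (0:ℝ) 1, ∀ u v : ℝ, |u| ≤ ρ₀ → |v| ≤ ρ₀ →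
      f₁ t u v ≤ (μ - ε) * |u|)
    (u v : C(I01, ℝ))
    (hun : ‖u‖ ≤ ρ₀) (hvn : ‖v‖ ≤ ρ₀)
    (lam : ℝ) (hlam : 1 ≤ lam)
    (hfix₁ : ∀ t : I01, lam * u t = ∫ s in Icc (0:ℝ) 1,
      k₁ (t:ℝ) s * g₁ s * f₁ s (u (Set.projIcc (0:ℝ) 1 zero_le_one s))
        (v (Set.projIcc (0:ℝ) 1 zero_le_one s))) :
    u = 0 := by
  have hu_le : ∀ x, |u x| ≤ ρ₀ := fun x => (u.norm_coe_le_norm x).trans hun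
  have hv_le : ∀ x, |v x| ≤ ρ₀ := fun x => (v.norm_coe_le_norm x).trans hvn
  have hL₁_pos : L₁ ∈ positiveOps I01 := fun w hw t => by
    change 0 ≤ L₁ w t
    rw [hL₁]
    refine integral_nonneg_of_ae ?_
    filter_upwards [h₁.g_nonneg] with s hg
    exact mul_nonneg (mul_nonneg (abs_nonneg _) hg) (hw _)
  have hdom : |u| ≤ (μ - ε) • L₁ |u| := fun t => by
    calc |u t| ≤ |lam * u t| := by
          rw [abs_mul]; exact le_mul_of_one_le_left (abs_nonneg _) (hlam.trans (le_abs_self _))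
      _ ≤ (μ - ε) * ∫ s in Icc (0:ℝ) 1,
            |k₁ t s| * g₁ s * |u (Set.projIcc (0:ℝ) 1 zero_le_one s)| := by
          rw [hfix₁ t]
          exact h₁.abs_integral_le t.2 (u.continuous.comp continuous_projIcc).measurable
            (fun _ => hu_le _) fun s hs => hf₁ s hs _ _ (hu_le _) (hv_le _)
      _ = ((μ - ε) • L₁ |u|) t := by rw [ContinuousMap.smul_apply, hL₁]; rfl
  have hspec : spectralRadius ℝ L₁ * ENNReal.ofReal (μ - ε) < 1 := by
    rw [hr, ← ENNReal.ofReal_mul hrpos.le, ENNReal.ofReal_lt_one, hμ, mul_sub,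
      mul_one_div_cancel hrpos.ne']
    linarith [mul_pos hrpos hε]
  ext t
  simpa using congr($(eq_zero_of_le_smul_apply hL₁_pos (abs_nonneg u) hdom hspec) t)

/-- with `L₁u(t) = ∫₀¹ |k₁(t,s)| g₁(s) u(s) ds` and
`f₁(t,u,v) ≤ (μ(L₁) − ε)|u|` on `[0,1]×[−ρ₀,ρ₀]²`, where `μ(L₁) = 1/r(L₁)`,
any `(u,v) ∈ K` with `‖u‖_∞ ≤ ρ₀`, `‖v‖_∞ ≤ ρ₀` and `λ(u,v) = T(u,v)` for some
`λ ≥ 1` must have `u = 0`. -/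
theorem stmt7 (k₁ k₂ : ℝ → ℝ → ℝ) (g₁ g₂ Φ₁ Φ₂ : ℝ → ℝ)
    (f₁ f₂ : ℝ → ℝ → ℝ → ℝ) (a₁ b₁ c₁ a₂ b₂ c₂ : ℝ)
    (h₁ : Standing k₁ g₁ Φ₁ f₁ a₁ b₁ c₁)
    (h₂ : Standing k₂ g₂ Φ₂ f₂ a₂ b₂ c₂)
    (L₁ : C(I01, ℝ) →L[ℝ] C(I01, ℝ))
    (hL₁ : ∀ w : C(I01, ℝ), ∀ t : I01, (L₁ w) t =
      ∫ s in Icc (0:ℝ) 1, |k₁ (t:ℝ) s| * g₁ s * w (Set.projIcc (0:ℝ) 1 zero_le_one s))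
    (r μ ε ρ₀ : ℝ)
    (hr : spectralRadius ℝ L₁ = ENNReal.ofReal r) (hrpos : 0 < r)
    (hμ : μ = 1 / r) (hε : 0 < ε) (hρ₀ : 0 < ρ₀)
    (hf₁ : ∀ t ∈ Icc (0:ℝ) 1, ∀ u v : ℝ, |u| ≤ ρ₀ → |v| ≤ ρ₀ →
      f₁ t u v ≤ (μ - ε) * |u|)
    (u v : C(I01, ℝ))
    (hu : u ∈ coneCM a₁ b₁ c₁) (hv : v ∈ coneCM a₂ b₂ c₂)
    (hun : ‖u‖ ≤ ρ₀) (hvn : ‖v‖ ≤ ρ₀)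
    (lam : ℝ) (hlam : 1 ≤ lam)
    (hfix₁ : ∀ t : I01, lam * u t = ∫ s in Icc (0:ℝ) 1,
      k₁ (t:ℝ) s * g₁ s * f₁ s (u (Set.projIcc (0:ℝ) 1 zero_le_one s))
        (v (Set.projIcc (0:ℝ) 1 zero_le_one s)))
    (hfix₂ : ∀ t : I01, lam * v t = ∫ s in Icc (0:ℝ) 1,
      k₂ (t:ℝ) s * g₂ s * f₂ s (u (Set.projIcc (0:ℝ) 1 zero_le_one s))
        (v (Set.projIcc (0:ℝ) 1 zero_le_one s))) :
    u = 0 :=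
  stmt7_general k₁ g₁ Φ₁ f₁ a₁ b₁ c₁ h₁ L₁ hL₁ r μ ε ρ₀ hr hrpos hμ hε hf₁ u v hun hvn lam hlam
    hfix₁
end

section
/- For the kernel k₂(t,s) associated with the BCs v'(0)=0, v(1)=α₂v'(ξ) with 0 < α₂ < 1−ξ and 0 < ξ < 1, one has |k₂(t,s)| ≤ 1 − s for all t,s ∈ [0,1], and k₂(t,s) ≥ (1−α₂−ξ)(1−s) for all t ∈ [0,ξ] and s ∈ [0,1]. -/
open Set

/-- The Green's function of `v'' = −h`, `v'(0) = 0`, `v(1) = α₂v'(ξ)`. -/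
noncomputable def greenK2 (α₂ ξ : ℝ) (t s : ℝ) : ℝ :=
  (1 - s) - (if s ≤ ξ then α₂ else 0) - (if s ≤ t then t - s else 0)

/-- for `0 < ξ < 1` and `0 < α₂ < 1 − ξ`, the kernel `k₂`
satisfies `|k₂(t,s)| ≤ 1 − s` on `[0,1]²` and `k₂(t,s) ≥ (1−α₂−ξ)(1−s)` for
`t ∈ [0,ξ]`, `s ∈ [0,1]`. -/
theorem stmt11 (α₂ ξ : ℝ) (hξ₀ : 0 < ξ) (hξ₁ : ξ < 1)
    (hα₀ : 0 < α₂) (hα₁ : α₂ < 1 - ξ) :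
    (∀ t ∈ Icc (0:ℝ) 1, ∀ s ∈ Icc (0:ℝ) 1, |greenK2 α₂ ξ t s| ≤ 1 - s) ∧
    (∀ t ∈ Icc (0:ℝ) ξ, ∀ s ∈ Icc (0:ℝ) 1,
      (1 - α₂ - ξ) * (1 - s) ≤ greenK2 α₂ ξ t s) := by
  constructor
  · rintro t ⟨ht0, ht1⟩ s ⟨hs0, hs1⟩
    rw [abs_le, greenK2]
    split_ifs with h1 h2 h2 <;>
      constructor <;> nlinarith [mul_nonneg hs0 hα₀.le]
  · rintro t ⟨ht0, htξ⟩ s ⟨hs0, hs1⟩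
    rw [greenK2]
    split_ifs with h1 h2 h2 <;> nlinarith [mul_nonneg hs0 hα₀.le]
end

section
/- For the kernel k₂(t,s) = (1−s) − α₂·1_{s≤ξ} − (t−s)·1_{s≤t} with 0 < α₂ < 1−ξ, 0 < ξ < 1, one has sup_{t∈[0,1]} ∫₀¹ |k₂(t,s)| ds = 1/2 − α₂ξ. -/
/-!
Integrating the three terms of `k₂(t, ·)` gives `∫₀¹ k₂(t,s) ds = 1/2 - α₂ξ - t²/2`. Since
`ξ + α₂ ≤ 1`, the kernel is negative only for `s ≤ ξ < 1 - α₂ < t`, where it equals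
`1 - α₂ - t`; hence `∫₀¹ |k₂(t,s)| ds = 1/2 - α₂ξ - t²/2 + 2ξ (t + α₂ - 1)⁺`. The correction is at
most `t²/2` by AM-GM, because `t ≥ ξ + (t + α₂ - 1)`, and it vanishes at `t = 0`.
-/

open Set MeasureTheory

theorem ite_le_eq_indicator (f : ℝ → ℝ) (ξ : ℝ) :
    (fun s => if s ≤ ξ then f s else 0) = (Iic ξ).indicator f := by
  ext s; simp [indicator_apply]

theorem setIntegral_Icc_ite_le {a b ξ : ℝ} (f : ℝ → ℝ) (haξ : a ≤ ξ) (hξb : ξ ≤ b) :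
    ∫ s in Icc a b, (if s ≤ ξ then f s else 0) = ∫ s in a..ξ, f s := by
  have hset : Icc a b ∩ Iic ξ = Icc a ξ := by
    ext s; simp only [mem_inter_iff, mem_Icc, mem_Iic]
    exact ⟨fun h => ⟨h.1.1, h.2⟩, fun h => ⟨⟨h.1, h.2.trans hξb⟩, h.2⟩⟩
  rw [ite_le_eq_indicator, setIntegral_indicator measurableSet_Iic, hset,
    integral_Icc_eq_integral_Ioc, intervalIntegral.integral_of_le haξ]

theorem MeasureTheory.IntegrableOn.ite_le {f : ℝ → ℝ} {S : Set ℝ} (hf : IntegrableOn f S) (ξ : ℝ) :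
    IntegrableOn (fun s => if s ≤ ξ then f s else 0) S := by
  rw [ite_le_eq_indicator]; exact hf.indicator measurableSet_Iic

section greenK2

variable {α₂ ξ t : ℝ}

theorem integrableOn_one_sub : IntegrableOn (fun s : ℝ => 1 - s) (Icc 0 1) :=
  (continuous_const.sub continuous_id).integrableOn_Icc

theorem integrableOn_ite_le_const (c : ℝ) :
    IntegrableOn (fun s : ℝ => if s ≤ ξ then c else 0) (Icc 0 1) :=
  continuous_const.integrableOn_Icc.ite_le ξ

theorem integrableOn_ite_le_sub :
    IntegrableOn (fun s : ℝ => if s ≤ t then t - s else 0) (Icc 0 1) :=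
  (continuous_const.sub continuous_id).integrableOn_Icc.ite_le t

theorem integrableOn_greenK2 : IntegrableOn (greenK2 α₂ ξ t) (Icc 0 1) :=
  (integrableOn_one_sub.sub (integrableOn_ite_le_const α₂)).sub integrableOn_ite_le_sub

theorem integral_greenK2 (hξ₀ : 0 ≤ ξ) (hξ₁ : ξ ≤ 1) (ht₀ : 0 ≤ t) (ht₁ : t ≤ 1) :
    ∫ s in Icc (0:ℝ) 1, greenK2 α₂ ξ t s = 1 / 2 - α₂ * ξ - t ^ 2 / 2 := by
  have h : IntegrableOn (fun s : ℝ => 1 - s - if s ≤ ξ then α₂ else 0) (Icc 0 1) :=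
    integrableOn_one_sub.sub (integrableOn_ite_le_const α₂)
  unfold greenK2
  rw [integral_sub h integrableOn_ite_le_sub,
    integral_sub integrableOn_one_sub (integrableOn_ite_le_const α₂),
    setIntegral_Icc_ite_le _ hξ₀ hξ₁, setIntegral_Icc_ite_le _ ht₀ ht₁,
    integral_Icc_eq_integral_Ioc, ← intervalIntegral.integral_of_le zero_le_one]
  simp only [intervalIntegral.integral_comp_sub_left fun x => x, integral_id,
    intervalIntegral.integral_const, sub_self, sub_zero, smul_eq_mul]
  ring

theorem abs_greenK2 {s : ℝ} (hξα : ξ + α₂ ≤ 1) (ht : t ≤ 1) (hs : s ≤ 1) :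
    |greenK2 α₂ ξ t s| = greenK2 α₂ ξ t s + if s ≤ ξ then 2 * max (t + α₂ - 1) 0 else 0 := by
  unfold greenK2
  split_ifs with hsξ hst hst
  · rcases le_total t (1 - α₂) with htα | htα
    · rw [abs_of_nonneg (by linarith), max_eq_right (by linarith)]
      ring
    · rw [abs_of_nonpos (by linarith), max_eq_left (by linarith)]
      ring
  · rw [abs_of_nonneg (by linarith), max_eq_right (by linarith)]
    ring
  · rw [abs_of_nonneg (by linarith), add_zero]
  · rw [abs_of_nonneg (by linarith), add_zero]

theorem integral_abs_greenK2 (hξ₀ : 0 ≤ ξ) (hξ₁ : ξ ≤ 1) (hξα : ξ + α₂ ≤ 1)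
    (ht₀ : 0 ≤ t) (ht₁ : t ≤ 1) :
    ∫ s in Icc (0:ℝ) 1, |greenK2 α₂ ξ t s|
      = 1 / 2 - α₂ * ξ - t ^ 2 / 2 + 2 * ξ * max (t + α₂ - 1) 0 := by
  rw [setIntegral_congr_fun measurableSet_Icc fun s hs => abs_greenK2 hξα ht₁ hs.2,
    integral_add integrableOn_greenK2 (integrableOn_ite_le_const _), integral_greenK2 hξ₀ hξ₁ ht₀ ht₁,
    setIntegral_Icc_ite_le _ hξ₀ hξ₁, intervalIntegral.integral_const, sub_zero, smul_eq_mul]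
  ring

theorem four_mul_mul_max_le_sq (hξ₀ : 0 ≤ ξ) (hξα : ξ + α₂ ≤ 1) (ht₀ : 0 ≤ t) :
    4 * ξ * max (t + α₂ - 1) 0 ≤ t ^ 2 := by
  rcases le_total (t + α₂ - 1) 0 with hu | hu
  · rw [max_eq_right hu, mul_zero]
    positivity
  · rw [max_eq_left hu]
    nlinarith [sq_nonneg (ξ - (t + α₂ - 1))]

end greenK2

theorem stmt12_general (α₂ ξ : ℝ) (hξ₀ : 0 < ξ) (hξ₁ : ξ < 1)
    (hα₁ : α₂ < 1 - ξ) :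
    IsGreatest ((fun t => ∫ s in Icc (0:ℝ) 1, |greenK2 α₂ ξ t s|) '' Icc (0:ℝ) 1)
      (1 / 2 - α₂ * ξ) := by
  have hξα : ξ + α₂ ≤ 1 := by linarith
  constructor
  · refine ⟨0, ⟨le_rfl, zero_le_one⟩, ?_⟩
    dsimp only
    rw [integral_abs_greenK2 hξ₀.le hξ₁.le hξα le_rfl zero_le_one,
      max_eq_right (by linarith)]
    ring
  · rintro _ ⟨t, ⟨ht₀, ht₁⟩, rfl⟩
    dsimp only
    rw [integral_abs_greenK2 hξ₀.le hξ₁.le hξα ht₀ ht₁]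
    linarith [four_mul_mul_max_le_sq hξ₀.le hξα ht₀]

/-- for `0 < ξ < 1`, `0 < α₂ < 1 − ξ`,
`sup_{t∈[0,1]} ∫₀¹ |k₂(t,s)| ds = 1/2 − α₂ξ` (the supremum is attained). -/
theorem stmt12 (α₂ ξ : ℝ) (hξ₀ : 0 < ξ) (hξ₁ : ξ < 1)
    (hα₀ : 0 < α₂) (hα₁ : α₂ < 1 - ξ) :
    IsGreatest ((fun t => ∫ s in Icc (0:ℝ) 1, |greenK2 α₂ ξ t s|) '' Icc (0:ℝ) 1)
      (1 / 2 - α₂ * ξ) :=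
  stmt12_general α₂ ξ hξ₀ hξ₁ hα₁
end

section
/- For the kernel k₁(t,s) = (1−s)/(1−α₁) − (α₁/(1−α₁))(η−s)·1_{s≤η} − (t−s)·1_{s≤t} with α₁ < 0, 0 < η < 1, and any 0 ≤ a < b ≤ η, one has min_{t∈[a,b]} ∫_a^b k₁(t,s) ds = ∫_a^b k₁(b,s) ds, and in particular ∫₀^b k₁(b,s) ds = ((1−α₁η)/(1−α₁) − b)·b. -/
open Set

/-- The Green's function of `u'' = −h`, `u'(0) = 0`, `α₁u(η) = u(1)`. -/
noncomputable def greenK1 (α₁ η : ℝ) (t s : ℝ) : ℝ :=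
  (1 - s) / (1 - α₁) - (if s ≤ η then α₁ / (1 - α₁) * (η - s) else 0) -
    (if s ≤ t then t - s else 0)

lemma green_eval (α₁ η t s : ℝ) (hα : α₁ < 0) (hs : s ≤ η) :
    greenK1 α₁ η t s = (1 - α₁ * η) / (1 - α₁) - s - max (t - s) 0 := by
  have h1 : (1 : ℝ) - α₁ ≠ 0 := by linarith
  have hmax : (if s ≤ t then t - s else 0) = max (t - s) 0 := by
    split_ifs with h
    · rw [max_eq_left]; linarith
    · rw [max_eq_right]; linarith
  rw [greenK1, if_pos hs, hmax]
  field_simp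
  ring

lemma max_integral (a t b : ℝ) (hat : a ≤ t) (htb : t ≤ b) :
    (∫ s in a..b, max (t - s) 0) = (t - a) ^ 2 / 2 := by
  have h1 : (∫ s in a..t, max (t - s) 0) = (t - a) ^ 2 / 2 := by
    rw [intervalIntegral.integral_congr (g := fun s => t - s)
      (fun s hs => by
        rw [uIcc_of_le hat] at hs
        exact max_eq_left (by linarith [hs.2]))]
    rw [intervalIntegral.integral_sub intervalIntegrable_const intervalIntegral.intervalIntegrable_id]
    simp [integral_id]
    ring
  have h2 : (∫ s in t..b, max (t - s) 0) = 0 := by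
    rw [intervalIntegral.integral_congr (g := fun _ => (0:ℝ))
      (fun s hs => by
        rw [uIcc_of_le htb] at hs
        exact max_eq_right (by linarith [hs.1]))]
    simp
  rw [← intervalIntegral.integral_add_adjacent_intervals (b := t), h1, h2, add_zero]
  · exact (Continuous.intervalIntegrable (by continuity) _ _)
  · exact (Continuous.intervalIntegrable (by continuity) _ _)

lemma key_formula (α₁ η a b t : ℝ) (hα : α₁ < 0) (hb : b ≤ η)
    (hat : a ≤ t) (htb : t ≤ b) :
    (∫ s in Icc a b, greenK1 α₁ η t s) =
      (1 - α₁ * η) / (1 - α₁) * (b - a) - (b ^ 2 - a ^ 2) / 2 - (t - a) ^ 2 / 2 := by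
  have hab : a ≤ b := le_trans hat htb
  rw [MeasureTheory.integral_Icc_eq_integral_Ioc, ← intervalIntegral.integral_of_le hab]
  rw [intervalIntegral.integral_congr
      (g := fun s => (1 - α₁ * η) / (1 - α₁) - s - max (t - s) 0)
      (fun s hs => by
        rw [uIcc_of_le hab] at hs
        exact green_eval α₁ η t s hα (le_trans hs.2 hb))]
  have hi1 : IntervalIntegrable (fun s => (1 - α₁ * η) / (1 - α₁) - s) MeasureTheory.volume a b :=
    Continuous.intervalIntegrable (by continuity) _ _
  have hi2 : IntervalIntegrable (fun s => max (t - s) 0) MeasureTheory.volume a b :=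
    Continuous.intervalIntegrable (by continuity) _ _
  rw [intervalIntegral.integral_sub hi1 hi2, max_integral a t b hat htb,
    intervalIntegral.integral_sub intervalIntegrable_const
      intervalIntegral.intervalIntegrable_id]
  simp [integral_id]
  ring

/-- for `α₁ < 0`, `0 < η < 1` and `0 ≤ a < b ≤ η`,
`min_{t∈[a,b]} ∫_a^b k₁(t,s) ds = ∫_a^b k₁(b,s) ds`, and
`∫₀^b k₁(b,s) ds = ((1−α₁η)/(1−α₁) − b)·b`. -/
theorem stmt14 (α₁ η : ℝ) (hα : α₁ < 0) (hη₀ : 0 < η) (hη₁ : η < 1)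
    (a b : ℝ) (ha : 0 ≤ a) (hab : a < b) (hb : b ≤ η) :
    IsLeast ((fun t => ∫ s in Icc a b, greenK1 α₁ η t s) '' Icc a b)
      (∫ s in Icc a b, greenK1 α₁ η b s) ∧
    (∫ s in Icc (0:ℝ) b, greenK1 α₁ η b s) = ((1 - α₁ * η) / (1 - α₁) - b) * b := by
  constructor
  · constructor
    · exact ⟨b, ⟨hab.le, le_refl b⟩, rfl⟩
    · rintro y ⟨t, ⟨h1, h2⟩, rfl⟩
      dsimp only
      rw [key_formula α₁ η a b t hα hb h1 h2,
        key_formula α₁ η a b b hα hb hab.le le_rfl]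
      nlinarith [sq_nonneg (b - t)]
  · rw [key_formula α₁ η 0 b b hα hb (le_trans ha hab.le) le_rfl]
    ring
end
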